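/- arXiv:2201.05490 — 8 statements merged into one kernel-verified Lean document; each statement's English description precedes it below -/
import Mathlib

section
/- Let r_g > 0 and L_g, C, ω be real numbers. Let J = [[0,-1],[1,0]] be the 2×2 skew-symmetric rotation generator, Z_g := L_g·ω·J − r_g·I₂ and Y_c := C·ω·J. Then the 4×4 real block matrix Q := [[Z_g, −I₂],[I₂, −Y_c]] is invertible. -/
/-!
Right multiplication by the block rotation `[[0, I₂], [-I₂, 0]]` turns `Q` into
`[[I₂, Z_g], [Y_c, I₂]]`, whose Schur complement is `I₂ - Y_c Z_g`. Since `J² = -I₂`, this equals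
`(1 + C L_g ω²) I₂ + r_g C ω J`, the matrix of multiplication by a complex number. Its
determinant `(1 + C L_g ω²)² + (r_g C ω)²` is positive: the first square is `1` when `C ω = 0`,
and the second is positive otherwise because `r_g ≠ 0`.
-/

open Matrix

def Jmat : Matrix (Fin 2) (Fin 2) ℝ := !![0, -1; 1, 0]

namespace Matrix

variable {n R : Type*} [Fintype n] [DecidableEq n] [CommRing R]

theorem isUnit_fromBlocks_neg_one_one_iff (A D : Matrix n n R) :
    IsUnit (fromBlocks A (-1) 1 D) ↔ IsUnit (1 + D * A) := by
  -- a quarter turn of the block columns moves the identity block to the top left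
  have hK : IsUnit (fromBlocks 0 1 (-1) 0 : Matrix (n ⊕ n) (n ⊕ n) R) :=
    .of_mul_eq_one (fromBlocks 0 (-1) 1 0) (by simp [fromBlocks_multiply, ← fromBlocks_one])
  have hturn : fromBlocks A (-1) 1 D * fromBlocks 0 1 (-1) 0 = fromBlocks 1 A (-D) 1 := by
    simp [fromBlocks_multiply]
  rw [← hK.mul_right_iff, hturn, isUnit_iff_isUnit_det, isUnit_iff_isUnit_det,
    det_fromBlocks_one₁₁, Matrix.neg_mul, sub_neg_eq_add]

end Matrix

theorem Jmat_mul_self : Jmat * Jmat = -1 := by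
  ext i j
  fin_cases i <;> fin_cases j <;> simp [Jmat]

theorem det_smul_one_add_smul_Jmat (a b : ℝ) : det (a • 1 + b • Jmat) = a ^ 2 + b ^ 2 := by
  have hentries : a • 1 + b • Jmat = !![a, -b; b, a] := by
    ext i j
    fin_cases i <;> fin_cases j <;> simp [Jmat]
  rw [hentries, det_fin_two_of]
  ring

theorem isUnit_smul_one_add_smul_Jmat {a b : ℝ} (h : a ≠ 0 ∨ b ≠ 0) :
    IsUnit (a • 1 + b • Jmat) := by
  rw [isUnit_iff_isUnit_det, det_smul_one_add_smul_Jmat, isUnit_iff_ne_zero]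
  rcases h with h | h <;> positivity

/-- with `r_g > 0`, the block matrix
`Q = [[Z_g, -I₂],[I₂, -Y_c]]`, where `Z_g = L_g·ω·J - r_g·I₂` and `Y_c = C·ω·J`,
is invertible. -/
theorem block_matrix_Q_invertible (rg Lg C ω : ℝ) (hrg : 0 < rg) :
    IsUnit (Matrix.fromBlocks
      ((Lg * ω) • Jmat - rg • (1 : Matrix (Fin 2) (Fin 2) ℝ))
      (-(1 : Matrix (Fin 2) (Fin 2) ℝ))
      (1 : Matrix (Fin 2) (Fin 2) ℝ)
      (-((C * ω) • Jmat))) := by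
  rw [isUnit_fromBlocks_neg_one_one_iff]
  have hschur : 1 + -((C * ω) • Jmat) * ((Lg * ω) • Jmat - rg • 1) =
      (1 + C * ω * (Lg * ω)) • 1 + (rg * (C * ω)) • Jmat := by
    simp only [Matrix.neg_mul, Matrix.mul_sub, Matrix.smul_mul, Matrix.mul_smul, Jmat_mul_self,
      Matrix.mul_one, add_smul, mul_smul, smul_neg, one_smul]
    module
  rw [hschur]
  apply isUnit_smul_one_add_smul_Jmat
  by_cases hCω : C * ω = 0
  · simp [hCω]
  · exact .inr (mul_ne_zero hrg.ne' hCω)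
end

section
/- Let r_g, L_g, C, L, r be positive reals and ω ∈ ℝ. For vectors ȳ₁₂, ȳ₃₄, ȳ₅₆, x̄ ∈ ℝ² with x̄ ≠ 0 and scalars ū₁ ∈ ℝ, ū₂₃ ∈ ℝ², the following four equations hold simultaneously: (i) −(r_g/L_g)ȳ₁₂ + (1/L_g)ȳ₃₄ + ū₁·J·ȳ₁₂ − x̄ = 0, (ii) −(1/C)ȳ₁₂ + (1/C)ȳ₅₆ + ū₁·J·ȳ₃₄ = 0, (iii) −(1/L)ȳ₃₄ − (r/L)ȳ₅₆ + ū₁·J·ȳ₅₆ + (1/L)ū₂₃ = 0, (iv) (ū₁ − ω)·J·x̄ = 0, if and only if ū₁ = ω, ū₂₃ = ȳ₃₄ − (L·ω·J − r·I₂)·ȳ₅₆, and (ȳ₁₂, ȳ₃₄) is the unique solution of the linear system (L_g·ω·J − r_g·I₂)·ȳ₁₂ + ȳ₃₄ = L_g·x̄ and ȳ₁₂ − C·ω·J·ȳ₃₄ = ȳ₅₆. Moreover, for every pair (x̄, ȳ₅₆) ∈ ℝ²×ℝ² this linear system has exactly one solution (ȳ₁₂, ȳ₃₄). -/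
/-!
Equation (iv) says `(ū₁ - ω) • J x̄ = 0`; since `J² = -1`, `J` is injective and `x̄ ≠ 0` forces
`ū₁ = ω`. With `ū₁ = ω` each of (i)–(iii) is a nonzero multiple (`1/L_g`, `-1/C`, `1/L`) of the
corresponding equilibrium equation. For the linear system, the second equation gives
`ȳ₁₂ = ȳ₅₆ + CωJ ȳ₃₄`, and substituting into the first leaves
`(1 + (L_g ω J - r_g) C ω J) ȳ₃₄ = L_g x̄ - (L_g ω J - r_g) ȳ₅₆`, whose matrix
`(1 - L_g C ω²) - r_g C ω J` has determinant `(1 - L_g C ω²)² + (r_g C ω)² > 0`.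
-/

open Matrix

theorem Matrix.mulVec_bijective_of_isUnit {R n : Type*} [CommRing R] [Fintype n]
    [DecidableEq n] {M : Matrix n n R} (hM : IsUnit M) : Function.Bijective M.mulVec := by
  obtain ⟨N, hN⟩ := hM.exists_left_inv
  refine ⟨fun z z' h => ?_, mulVec_surjective_iff_isUnit.2 hM⟩
  simpa [mulVec_mulVec, hN] using congrArg (N *ᵥ ·) h

theorem Matrix.existsUnique_mulVec_add_and_sub_mulVec {R n : Type*} [CommRing R] [Fintype n]
    [DecidableEq n] {A B : Matrix n n R} (hAB : IsUnit (1 + A * B)) (v w : n → R) :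
    ∃! p : (n → R) × (n → R), A *ᵥ p.1 + p.2 = v ∧ p.1 - B *ᵥ p.2 = w := by
  have expand : ∀ z, (1 + A * B) *ᵥ z = z + A *ᵥ (B *ᵥ z) := fun z => by
    rw [add_mulVec, one_mulVec, mulVec_mulVec]
  obtain ⟨z, hz, hz_unique⟩ := (mulVec_bijective_of_isUnit hAB).existsUnique (v - A *ᵥ w)
  refine ⟨(w + B *ᵥ z, z), ⟨?_, by simp⟩, ?_⟩
  · rw [expand] at hz
    rw [mulVec_add, ← sub_eq_zero, ← sub_eq_zero.2 hz]
    abel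
  · rintro ⟨y, z'⟩ ⟨h₁, h₂⟩
    obtain rfl : y = w + B *ᵥ z' := by rw [← h₂]; abel
    obtain rfl : z' = z := hz_unique z' (by show _ = _; rw [expand, ← h₁, mulVec_add]; abel)
    rfl

section EquilibriumEquations

variable {K n : Type*} [Field K] [Fintype n] (J : Matrix n n K)

theorem grid_current_equation_iff [DecidableEq n] {rg Lg ω : K} (hLg : Lg ≠ 0) (y₁₂ y₃₄ x : n → K) :
    -(rg / Lg) • y₁₂ + (1 / Lg) • y₃₄ + ω • (J *ᵥ y₁₂) - x = 0 ↔
      ((Lg * ω) • J - rg • 1) *ᵥ y₁₂ + y₃₄ = Lg • x := by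
  have : -(rg / Lg) • y₁₂ + (1 / Lg) • y₃₄ + ω • (J *ᵥ y₁₂) - x =
      Lg⁻¹ • (((Lg * ω) • J - rg • 1) *ᵥ y₁₂ + y₃₄ - Lg • x) := by
    rw [sub_mulVec, smul_mulVec, smul_mulVec, one_mulVec]
    match_scalars <;> field_simp
  rw [this, smul_eq_zero, or_iff_right (inv_ne_zero hLg), sub_eq_zero]

theorem filter_voltage_equation_iff {C ω : K} (hC : C ≠ 0) (y₁₂ y₃₄ y₅₆ : n → K) :
    -(1 / C) • y₁₂ + (1 / C) • y₅₆ + ω • (J *ᵥ y₃₄) = 0 ↔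
      y₁₂ - ((C * ω) • J) *ᵥ y₃₄ = y₅₆ := by
  have : -(1 / C) • y₁₂ + (1 / C) • y₅₆ + ω • (J *ᵥ y₃₄) =
      (-C)⁻¹ • (y₁₂ - ((C * ω) • J) *ᵥ y₃₄ - y₅₆) := by
    rw [smul_mulVec]
    match_scalars <;> field_simp
  rw [this, smul_eq_zero, or_iff_right (inv_ne_zero (neg_ne_zero.2 hC)), sub_eq_zero]

theorem converter_current_equation_iff [DecidableEq n] {r L ω : K} (hL : L ≠ 0) (y₃₄ y₅₆ u : n → K) :
    -(1 / L) • y₃₄ + -(r / L) • y₅₆ + ω • (J *ᵥ y₅₆) + (1 / L) • u = 0 ↔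
      u = y₃₄ - ((L * ω) • J - r • 1) *ᵥ y₅₆ := by
  have : -(1 / L) • y₃₄ + -(r / L) • y₅₆ + ω • (J *ᵥ y₅₆) + (1 / L) • u =
      L⁻¹ • (u - (y₃₄ - ((L * ω) • J - r • 1) *ᵥ y₅₆)) := by
    rw [sub_mulVec, smul_mulVec, smul_mulVec, one_mulVec]
    match_scalars <;> field_simp
  rw [this, smul_eq_zero, or_iff_right (inv_ne_zero hL), sub_eq_zero]

end EquilibriumEquations

theorem Jmat_mulVec_eq_zero_iff {v : Fin 2 → ℝ} : Jmat *ᵥ v = 0 ↔ v = 0 := by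
  refine ⟨fun h => ?_, fun h => by rw [h, mulVec_zero]⟩
  calc v = -((Jmat * Jmat) *ᵥ v) := by rw [Jmat_mul_self, neg_mulVec, one_mulVec, neg_neg]
    _ = 0 := by rw [← mulVec_mulVec, h, mulVec_zero, neg_zero]

theorem det_one_add_smul_Jmat_sub_mul_smul_Jmat (a b c : ℝ) :
    (1 + (a • Jmat - b • 1) * (c • Jmat)).det = (1 - a * c) ^ 2 + (b * c) ^ 2 := by
  simp [det_fin_two, Jmat, mul_apply, Fin.sum_univ_two, one_apply]
  ring

theorem one_sub_mul_sq_add_mul_sq_pos {a b c : ℝ} (hb : b ≠ 0) :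
    0 < (1 - a * c) ^ 2 + (b * c) ^ 2 := by
  rcases eq_or_ne c 0 with rfl | hc
  · norm_num
  · positivity

theorem assignable_equilibria_general
    (rg Lg C L r ω : ℝ) (hrg : 0 < rg) (hLg : 0 < Lg) (hC : 0 < C)
    (hL : 0 < L)
    (y12 y34 y56 xbar : Fin 2 → ℝ) (hx : xbar ≠ 0) (u1 : ℝ) (u23 : Fin 2 → ℝ) :
    ((( -(rg / Lg)) • y12 + (1 / Lg) • y34 + u1 • Jmat.mulVec y12 - xbar = 0 ∧
      (-(1 / C)) • y12 + (1 / C) • y56 + u1 • Jmat.mulVec y34 = 0 ∧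
      (-(1 / L)) • y34 + (-(r / L)) • y56 + u1 • Jmat.mulVec y56 + (1 / L) • u23 = 0 ∧
      (u1 - ω) • Jmat.mulVec xbar = 0) ↔
     (u1 = ω ∧
      u23 = y34 - ((L * ω) • Jmat - r • (1 : Matrix (Fin 2) (Fin 2) ℝ)).mulVec y56 ∧
      ((Lg * ω) • Jmat - rg • (1 : Matrix (Fin 2) (Fin 2) ℝ)).mulVec y12 + y34 = Lg • xbar ∧
      y12 - ((C * ω) • Jmat).mulVec y34 = y56)) ∧
    (∀ xb yc : Fin 2 → ℝ, ∃! p : (Fin 2 → ℝ) × (Fin 2 → ℝ),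
      ((Lg * ω) • Jmat - rg • (1 : Matrix (Fin 2) (Fin 2) ℝ)).mulVec p.1 + p.2 = Lg • xb ∧
      p.1 - ((C * ω) • Jmat).mulVec p.2 = yc) := by
  have frequency_iff : (u1 - ω) • Jmat *ᵥ xbar = 0 ↔ u1 = ω := by
    rw [smul_eq_zero, Jmat_mulVec_eq_zero_iff, or_iff_left hx, sub_eq_zero]
  have hdet : IsUnit (1 + ((Lg * ω) • Jmat - rg • 1) * ((C * ω) • Jmat)).det := by
    rw [det_one_add_smul_Jmat_sub_mul_smul_Jmat]
    exact (one_sub_mul_sq_add_mul_sq_pos hrg.ne').ne'.isUnit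
  refine ⟨?_, fun xb yc =>
    existsUnique_mulVec_add_and_sub_mulVec (isUnit_iff_isUnit_det _ |>.2 hdet) (Lg • xb) yc⟩
  rw [frequency_iff]
  constructor
  · rintro ⟨h₁, h₂, h₃, rfl⟩
    exact ⟨rfl, (converter_current_equation_iff _ hL.ne' _ _ _).1 h₃,
      (grid_current_equation_iff _ hLg.ne' _ _ _).1 h₁,
      (filter_voltage_equation_iff _ hC.ne' _ _ _).1 h₂⟩
  · rintro ⟨rfl, h₃, h₁, h₂⟩
    exact ⟨(grid_current_equation_iff _ hLg.ne' _ _ _).2 h₁,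
      (filter_voltage_equation_iff _ hC.ne' _ _ _).2 h₂,
      (converter_current_equation_iff _ hL.ne' _ _ _).2 h₃, rfl⟩

/-- characterization of the assignable equilibria of the dq model of
the grid-connected VSC, and the corresponding equilibrium input. -/
theorem assignable_equilibria
    (rg Lg C L r ω : ℝ) (hrg : 0 < rg) (hLg : 0 < Lg) (hC : 0 < C)
    (hL : 0 < L) (hr : 0 < r)
    (y12 y34 y56 xbar : Fin 2 → ℝ) (hx : xbar ≠ 0) (u1 : ℝ) (u23 : Fin 2 → ℝ) :
    ((( -(rg / Lg)) • y12 + (1 / Lg) • y34 + u1 • Jmat.mulVec y12 - xbar = 0 ∧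
      (-(1 / C)) • y12 + (1 / C) • y56 + u1 • Jmat.mulVec y34 = 0 ∧
      (-(1 / L)) • y34 + (-(r / L)) • y56 + u1 • Jmat.mulVec y56 + (1 / L) • u23 = 0 ∧
      (u1 - ω) • Jmat.mulVec xbar = 0) ↔
     (u1 = ω ∧
      u23 = y34 - ((L * ω) • Jmat - r • (1 : Matrix (Fin 2) (Fin 2) ℝ)).mulVec y56 ∧
      ((Lg * ω) • Jmat - rg • (1 : Matrix (Fin 2) (Fin 2) ℝ)).mulVec y12 + y34 = Lg • xbar ∧
      y12 - ((C * ω) • Jmat).mulVec y34 = y56)) ∧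
    (∀ xb yc : Fin 2 → ℝ, ∃! p : (Fin 2 → ℝ) × (Fin 2 → ℝ),
      ((Lg * ω) • Jmat - rg • (1 : Matrix (Fin 2) (Fin 2) ℝ)).mulVec p.1 + p.2 = Lg • xb ∧
      p.1 - ((C * ω) • Jmat).mulVec p.2 = yc) :=
  assignable_equilibria_general rg Lg C L r ω hrg hLg hC hL y12 y34 y56 xbar hx u1 u23
end

section
/- Let ω ∈ ℝ, let u₁ : ℝ → ℝ and q : ℝ → ℝ² be continuous, and let y, z₁, z₂, x : ℝ → ℝ² be differentiable functions satisfying for all t: y'(t) = q(t) − x(t), x'(t) = (u₁(t) − ω)·J·x(t), z₁'(t) = u₁(t)·J·z₁(t) + J·q(t), and z₂'(t) = u₁(t)·J·(z₂(t) − J·y(t)). Then the function e : ℝ → ℝ² defined by e(t) := ω·(z₁(t) + z₂(t) − J·y(t)) + x(t) satisfies e'(t) = u₁(t)·J·e(t) for all t. -/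
/-!
Differentiating `e = ω (z₁ + z₂ - J y) + x` termwise, the measured input enters only
through `ω J q` (from `z₁`) and `-ω J q` (from `J y`), and the term `ω J x` coming from
`-J y` cancels the `-ω J x` in the dynamics of `x`. What is left is `u₁ J` applied to `e`.
-/

open Matrix

theorem HasDerivAt.matrix_mulVec {𝕜 m n : Type*} [NontriviallyNormedField 𝕜] [CompleteSpace 𝕜]
    [Fintype m] [Fintype n] (A : Matrix m n 𝕜) {f : 𝕜 → n → 𝕜} {f' : n → 𝕜} {t : 𝕜}
    (hf : HasDerivAt f f' t) : HasDerivAt (fun τ => A *ᵥ f τ) (A *ᵥ f') t :=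
  (mulVecLin A).toContinuousLinearMap.hasFDerivAt.comp_hasDerivAt t hf

theorem gpebo_error_deriv_eq_smul_mulVec {n R : Type*} [Fintype n] [CommRing R]
    (A : Matrix n n R) (ω u : R) (q y z₁ z₂ x : n → R) :
    ω • (u • A *ᵥ z₁ + A *ᵥ q + u • A *ᵥ (z₂ - A *ᵥ y) - A *ᵥ (q - x)) + (u - ω) • A *ᵥ x =
      u • A *ᵥ (ω • (z₁ + z₂ - A *ᵥ y) + x) := by
  simp only [mulVec_add, mulVec_sub, mulVec_smul]
  module

theorem gpebo_error_dynamics_general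
    (ω : ℝ) (u1 : ℝ → ℝ) (q : ℝ → Fin 2 → ℝ)
    (y z1 z2 x : ℝ → Fin 2 → ℝ)
    (hy : ∀ t, HasDerivAt y (q t - x t) t)
    (hx : ∀ t, HasDerivAt x ((u1 t - ω) • Jmat.mulVec (x t)) t)
    (hz1 : ∀ t, HasDerivAt z1 (u1 t • Jmat.mulVec (z1 t) + Jmat.mulVec (q t)) t)
    (hz2 : ∀ t, HasDerivAt z2 (u1 t • Jmat.mulVec (z2 t - Jmat.mulVec (y t))) t) :
    ∀ t, HasDerivAt (fun τ => ω • (z1 τ + z2 τ - Jmat.mulVec (y τ)) + x τ)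
      (u1 t • Jmat.mulVec (ω • (z1 t + z2 t - Jmat.mulVec (y t)) + x t)) t := by
  intro t
  have he := (((hz1 t).add (hz2 t)).sub ((hy t).matrix_mulVec Jmat)).const_smul ω |>.add (hx t)
  exact he.congr_deriv
    (gpebo_error_deriv_eq_smul_mulVec Jmat ω (u1 t) (q t) (y t) (z1 t) (z2 t) (x t))

/-- the GPEBO error signal `e = ω·(z₁ + z₂ - J·y) + x` satisfies the
homogeneous LTV dynamics `e' = u₁·J·e`. -/
theorem gpebo_error_dynamics
    (ω : ℝ) (u1 : ℝ → ℝ) (q : ℝ → Fin 2 → ℝ)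
    (hu1 : Continuous u1) (hq : Continuous q)
    (y z1 z2 x : ℝ → Fin 2 → ℝ)
    (hy : ∀ t, HasDerivAt y (q t - x t) t)
    (hx : ∀ t, HasDerivAt x ((u1 t - ω) • Jmat.mulVec (x t)) t)
    (hz1 : ∀ t, HasDerivAt z1 (u1 t • Jmat.mulVec (z1 t) + Jmat.mulVec (q t)) t)
    (hz2 : ∀ t, HasDerivAt z2 (u1 t • Jmat.mulVec (z2 t - Jmat.mulVec (y t))) t) :
    ∀ t, HasDerivAt (fun τ => ω • (z1 τ + z2 τ - Jmat.mulVec (y τ)) + x τ)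
      (u1 t • Jmat.mulVec (ω • (z1 t + z2 t - Jmat.mulVec (y t)) + x t)) t :=
  gpebo_error_dynamics_general ω u1 q y z1 z2 x hy hx hz1 hz2
end

section
/- Let ω ∈ ℝ, let u₁ : ℝ → ℝ and q : ℝ → ℝ² be continuous, let y, z₁, z₂, x : ℝ → ℝ² be differentiable satisfying y' = q − x, x' = (u₁ − ω)·J·x, z₁' = u₁·J·z₁ + J·q, z₂' = u₁·J·(z₂ − J·y), and let Φ : ℝ → M₂(ℝ) be differentiable with Φ' = u₁·J·Φ and Φ(0) = I₂. Define θ₂₃ := ω·(z₁(0) + z₂(0) − J·y(0)) + x(0) ∈ ℝ². Then for all t ∈ ℝ: x(t) = Φ(t)·θ₂₃ − ω·(z₁(t) + z₂(t) − J·y(t)). Equivalently, x(t) = W(t)·θ, where W(t) ∈ ℝ^{2×3} is the matrix whose columns are −(z₁(t)+z₂(t)−J·y(t)) followed by the two columns of Φ(t), and θ := (ω, θ₂₃) ∈ ℝ³. -/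
open Matrix

/-- first claim of Proposition 1: the unmeasurable state `x` satisfies
`x(t) = Φ(t)·θ₂₃ - ω·(z₁(t) + z₂(t) - J·y(t))`, equivalently `x(t) = W(t)·θ` with
`W(t) = [-(z₁+z₂-J·y) | Φ]` and `θ = (ω, θ₂₃)`. -/
theorem gpebo_state_reconstruction
    (ω : ℝ) (u1 : ℝ → ℝ) (q : ℝ → Fin 2 → ℝ)
    (hu1 : Continuous u1) (hq : Continuous q)
    (y z1 z2 x : ℝ → Fin 2 → ℝ)
    (hy : ∀ t, HasDerivAt y (q t - x t) t)
    (hx : ∀ t, HasDerivAt x ((u1 t - ω) • Jmat.mulVec (x t)) t)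
    (hz1 : ∀ t, HasDerivAt z1 (u1 t • Jmat.mulVec (z1 t) + Jmat.mulVec (q t)) t)
    (hz2 : ∀ t, HasDerivAt z2 (u1 t • Jmat.mulVec (z2 t - Jmat.mulVec (y t))) t)
    (Φ : ℝ → Matrix (Fin 2) (Fin 2) ℝ)
    (hΦ : ∀ t i j, HasDerivAt (fun τ => Φ τ i j) (u1 t * (Jmat * Φ t) i j) t)
    (hΦ0 : Φ 0 = 1)
    (θ23 : Fin 2 → ℝ)
    (hθ23 : θ23 = ω • (z1 0 + z2 0 - Jmat.mulVec (y 0)) + x 0)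
    (W : ℝ → Matrix (Fin 2) (Fin 3) ℝ)
    (hW : ∀ t, W t = Matrix.of fun i j =>
      ![-(z1 t + z2 t - Jmat.mulVec (y t)) i, Φ t i 0, Φ t i 1] j)
    (θ : Fin 3 → ℝ) (hθ : θ = ![ω, θ23 0, θ23 1]) :
    ∀ t : ℝ,
      x t = (Φ t).mulVec θ23 - ω • (z1 t + z2 t - Jmat.mulVec (y t)) ∧
      x t = (W t).mulVec θ := by
  have hx' := fun t i => hasDerivAt_pi.1 (hx t) i
  have hy' := fun t i => hasDerivAt_pi.1 (hy t) i
  have hz1' := fun t i => hasDerivAt_pi.1 (hz1 t) i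
  have hz2' := fun t i => hasDerivAt_pi.1 (hz2 t) i
  set e0 : ℝ → ℝ := fun τ =>
    x τ 0 + ω * (z1 τ 0 + z2 τ 0 + y τ 1) - (Φ τ 0 0 * θ23 0 + Φ τ 0 1 * θ23 1) with he0def
  set e1 : ℝ → ℝ := fun τ =>
    x τ 1 + ω * (z1 τ 1 + z2 τ 1 - y τ 0) - (Φ τ 1 0 * θ23 0 + Φ τ 1 1 * θ23 1) with he1def
  have he0 : ∀ t, HasDerivAt e0 (-(u1 t) * e1 t) t := by
    intro t
    have h := ((hx' t 0).add ((((hz1' t 0).add (hz2' t 0)).add (hy' t 1)).const_mul ω)).sub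
      (((hΦ t 0 0).mul_const (θ23 0)).add ((hΦ t 0 1).mul_const (θ23 1)))
    refine h.congr_deriv ?_
    simp [he1def, Jmat, Matrix.mulVec, Matrix.mul_apply, Fin.sum_univ_two,
      dotProduct, Matrix.vecHead, Matrix.vecTail, Function.comp, Fin.succ_zero_eq_one]
    ring
  have he1 : ∀ t, HasDerivAt e1 (u1 t * e0 t) t := by
    intro t
    have h := ((hx' t 1).add ((((hz1' t 1).add (hz2' t 1)).sub (hy' t 0)).const_mul ω)).sub
      (((hΦ t 1 0).mul_const (θ23 0)).add ((hΦ t 1 1).mul_const (θ23 1)))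
    refine h.congr_deriv ?_
    simp [he0def, Jmat, Matrix.mulVec, Matrix.mul_apply, Fin.sum_univ_two,
      dotProduct, Matrix.vecHead, Matrix.vecTail, Function.comp, Fin.succ_zero_eq_one]
    ring
  set N : ℝ → ℝ := fun τ => e0 τ * e0 τ + e1 τ * e1 τ with hNdef
  have hN : ∀ t, HasDerivAt N 0 t := by
    intro t
    have h := ((he0 t).mul (he0 t)).add ((he1 t).mul (he1 t))
    refine h.congr_deriv ?_
    ring
  have hNconst : ∀ t, N t = N 0 := fun t =>
    is_const_of_deriv_eq_zero (fun s => (hN s).differentiableAt)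
      (fun s => (hN s).deriv) t 0
  have he00 : e0 0 = 0 := by
    simp [he0def, hθ23, hΦ0, Jmat, Matrix.mulVec, Fin.sum_univ_two, dotProduct, Matrix.vecHead, Matrix.vecTail, Function.comp, Fin.succ_zero_eq_one,
      Matrix.one_apply]
    ring
  have he10 : e1 0 = 0 := by
    simp [he1def, hθ23, hΦ0, Jmat, Matrix.mulVec, Fin.sum_univ_two, dotProduct, Matrix.vecHead, Matrix.vecTail, Function.comp, Fin.succ_zero_eq_one,
      Matrix.one_apply]
    ring
  have hzero : ∀ t, e0 t = 0 ∧ e1 t = 0 := by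
    intro t
    have h := hNconst t
    simp only [hNdef] at h
    rw [he00, he10] at h
    constructor <;> nlinarith [mul_self_nonneg (e0 t), mul_self_nonneg (e1 t)]
  intro t
  obtain ⟨h0, h1⟩ := hzero t
  simp only [he0def] at h0
  simp only [he1def] at h1
  constructor
  · funext i
    fin_cases i <;>
      simp [Jmat, Matrix.mulVec, Fin.sum_univ_two, dotProduct, Fin.mk_zero,
        Fin.mk_one, Matrix.vecHead, Matrix.vecTail, Function.comp, Fin.succ_zero_eq_one] <;>
      linarith
  · funext i
    fin_cases i <;>
      simp [hW, hθ, Jmat, Matrix.mulVec, Fin.sum_univ_two, Fin.sum_univ_three,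
        dotProduct, Fin.mk_zero, Fin.mk_one, Matrix.vecHead, Matrix.vecTail, Function.comp, Fin.succ_zero_eq_one] <;>
      linarith
end

section
/- Assume the hypotheses: ω ∈ ℝ; u₁ : ℝ → ℝ and q : ℝ → ℝ² continuous; y, z₁, z₂, x : ℝ → ℝ² differentiable with y' = q − x, x' = (u₁ − ω)·J·x, z₁' = u₁·J·z₁ + J·q, z₂' = u₁·J·(z₂ − J·y); Φ : ℝ → M₂(ℝ) differentiable with Φ' = u₁·J·Φ, Φ(0) = I₂; set s := z₁ + z₂ − J·y and θ₂₃ := ω·s(0) + x(0). Let λ > 0 and let y_f, q_f, s_f : ℝ → ℝ² and Φ_f : ℝ → M₂(ℝ) be differentiable functions (with arbitrary initial values) satisfying y_f' = λ(y − y_f), q_f' = λ(q − q_f), s_f' = λ(s − s_f), Φ_f' = λ(Φ − Φ_f). Define Y := λ(y − y_f) − q_f : ℝ → ℝ² and Ω : ℝ → ℝ^{2×3} the matrix with columns s_f followed by the two columns of −Φ_f, and θ := (ω, θ₂₃) ∈ ℝ³. Then for all t ≥ 0: Y(t) − Ω(t)·θ = e^{−λt}·(Y(0) − Ω(0)·θ).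 In particular ‖Y(t) − Ω(t)·θ‖ ≤ e^{−λt}·‖Y(0) − Ω(0)·θ‖, i.e. Y = Ω·θ + ε_t with ε_t decaying exponentially at rate λ. -/
/-!
The residual `δ := Φ θ₂₃ − (ω s + x)` of the unfiltered relation solves the linear ODE
`δ' = u₁ J δ` with `δ(0) = 0`; as `J` is skew-symmetric, `|δ|²` is constant, so `δ ≡ 0`.
Feeding `y' = q − x` and `δ = 0` into the filter equations shows that the filtered residual
`ε = Y − Ω θ` solves `ε' = −λ ε`, hence `ε(t) = e^{−λt} ε(0)`.
-/

open Matrix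

theorem HasDerivAt.matrix_mulVec_s7 {m n : Type*} [Fintype m] [Fintype n]
    {M : ℝ → Matrix m n ℝ} {M' : Matrix m n ℝ} {v : ℝ → n → ℝ} {v' : n → ℝ} {t : ℝ}
    (hM : ∀ i j, HasDerivAt (fun τ => M τ i j) (M' i j) t) (hv : HasDerivAt v v' t) :
    HasDerivAt (fun τ => M τ *ᵥ v τ) (M' *ᵥ v t + M t *ᵥ v') t := by
  refine hasDerivAt_pi.2 fun i => ?_
  simp only [mulVec, dotProduct, Pi.add_apply, ← Finset.sum_add_distrib]
  exact HasDerivAt.fun_sum fun j _ => ((hM i j).mul (hasDerivAt_pi.1 hv j)).congr_deriv (by ring)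

theorem HasDerivAt.const_mulVec {m n : Type*} [Fintype m] [Fintype n] (A : Matrix m n ℝ)
    {v : ℝ → n → ℝ} {v' : n → ℝ} {t : ℝ} (hv : HasDerivAt v v' t) :
    HasDerivAt (fun τ => A *ᵥ v τ) (A *ᵥ v') t := by
  simpa using HasDerivAt.matrix_mulVec_s7 (M' := 0) (fun i j => hasDerivAt_const t (A i j)) hv

theorem HasDerivAt.mulVec_const {m n : Type*} [Fintype m] [Fintype n]
    {M : ℝ → Matrix m n ℝ} {M' : Matrix m n ℝ} {t : ℝ}
    (hM : ∀ i j, HasDerivAt (fun τ => M τ i j) (M' i j) t) (v : n → ℝ) :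
    HasDerivAt (fun τ => M τ *ᵥ v) (M' *ᵥ v) t := by
  simpa using HasDerivAt.matrix_mulVec_s7 hM (hasDerivAt_const t v)

theorem HasDerivAt.dotProduct_self {n : Type*} [Fintype n] {v : ℝ → n → ℝ} {v' : n → ℝ}
    {t : ℝ} (hv : HasDerivAt v v' t) :
    HasDerivAt (fun τ => v τ ⬝ᵥ v τ) (2 * (v t ⬝ᵥ v')) t := by
  simp only [dotProduct, Finset.mul_sum]
  exact HasDerivAt.fun_sum fun i _ =>
    ((hasDerivAt_pi.1 hv i).mul (hasDerivAt_pi.1 hv i)).congr_deriv (by ring)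

theorem dotProduct_mulVec_self_of_transpose_eq_neg {n : Type*} [Fintype n]
    {A : Matrix n n ℝ} (hA : Aᵀ = -A) (v : n → ℝ) : v ⬝ᵥ (A *ᵥ v) = 0 := by
  have h : v ⬝ᵥ (A *ᵥ v) = -(v ⬝ᵥ (A *ᵥ v)) := by
    calc v ⬝ᵥ (A *ᵥ v) = (Aᵀ *ᵥ v) ⬝ᵥ v := by rw [dotProduct_mulVec, mulVec_transpose]
      _ = -(v ⬝ᵥ (A *ᵥ v)) := by rw [hA, neg_mulVec, neg_dotProduct, dotProduct_comm]
  linarith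

theorem eq_zero_of_hasDerivAt_smul_mulVec_of_transpose_eq_neg {n : Type*} [Fintype n]
    {A : Matrix n n ℝ} (hA : Aᵀ = -A) {a : ℝ → ℝ} {v : ℝ → n → ℝ}
    (hv : ∀ t, HasDerivAt v (a t • A *ᵥ v t) t) (hv0 : v 0 = 0) (t : ℝ) : v t = 0 := by
  have hderiv : ∀ τ, HasDerivAt (fun τ => v τ ⬝ᵥ v τ) 0 τ := fun τ =>
    (hv τ).dotProduct_self.congr_deriv <| by
      rw [dotProduct_smul, dotProduct_mulVec_self_of_transpose_eq_neg hA, smul_zero, mul_zero]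
  have hconst := is_const_of_deriv_eq_zero (fun τ => (hderiv τ).differentiableAt)
    (fun τ => (hderiv τ).deriv) t 0
  simpa [hv0, dotProduct_self_eq_zero] using hconst

theorem eq_exp_smul_of_hasDerivAt_eq_neg_smul {F : Type*} [NormedAddCommGroup F]
    [NormedSpace ℝ F] {lam : ℝ} {f : ℝ → F} (hf : ∀ t, HasDerivAt f (-lam • f t) t) (t : ℝ) :
    f t = Real.exp (-(lam * t)) • f 0 := by
  have hderiv : ∀ τ, HasDerivAt (fun τ => Real.exp (lam * τ) • f τ) 0 τ := fun τ => by
    have he : HasDerivAt (fun τ => Real.exp (lam * τ)) (Real.exp (lam * τ) * lam) τ := by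
      simpa using ((hasDerivAt_id τ).const_mul lam).exp
    refine (he.smul (hf τ)).congr_deriv ?_
    rw [smul_smul, ← add_smul, mul_neg, neg_add_cancel, zero_smul]
  have hconst := is_const_of_deriv_eq_zero (fun τ => (hderiv τ).differentiableAt)
    (fun τ => (hderiv τ).deriv) t 0
  simp only [mul_zero, Real.exp_zero, one_smul] at hconst
  rw [← hconst, smul_smul, ← Real.exp_add]
  simp

theorem Jmat_transpose : Jmatᵀ = -Jmat := by
  ext i j; fin_cases i <;> fin_cases j <;> simp [Jmat]

theorem Real.sqrt_mul_sq_add_mul_sq {c : ℝ} (hc : 0 ≤ c) (a b : ℝ) :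
    Real.sqrt ((c * a) ^ 2 + (c * b) ^ 2) = c * Real.sqrt (a ^ 2 + b ^ 2) := by
  rw [mul_pow, mul_pow, ← mul_add, Real.sqrt_mul (sq_nonneg c), Real.sqrt_sq hc]

theorem regressor_mulVec (s : Fin 2 → ℝ) (Φ : Matrix (Fin 2) (Fin 2) ℝ) (ω : ℝ) (θ : Fin 2 → ℝ) :
    (Matrix.of fun i j => ![s i, -(Φ i 0), -(Φ i 1)] j) *ᵥ ![ω, θ 0, θ 1] = ω • s - Φ *ᵥ θ := by
  ext i
  fin_cases i <;> simp [mulVec, dotProduct, Fin.sum_univ_three] <;> ring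

theorem smul_add_eq_mulVec_of_hasDerivAt {ω : ℝ} {u1 : ℝ → ℝ} {x s : ℝ → Fin 2 → ℝ}
    {Φ : ℝ → Matrix (Fin 2) (Fin 2) ℝ}
    (hx : ∀ t, HasDerivAt x ((u1 t - ω) • Jmat *ᵥ x t) t)
    (hs : ∀ t, HasDerivAt s (u1 t • Jmat *ᵥ s t + Jmat *ᵥ x t) t)
    (hΦ : ∀ t i j, HasDerivAt (fun τ => Φ τ i j) (u1 t * (Jmat * Φ t) i j) t)
    (hΦ0 : Φ 0 = 1) (t : ℝ) :
    ω • s t + x t = Φ t *ᵥ (ω • s 0 + x 0) := by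
  have hΦv : ∀ t, HasDerivAt (fun τ => Φ τ *ᵥ (ω • s 0 + x 0))
      (u1 t • Jmat *ᵥ (Φ t *ᵥ (ω • s 0 + x 0))) t := fun t => by
    simpa only [smul_mulVec, mulVec_mulVec] using
      HasDerivAt.mulVec_const (M' := u1 t • (Jmat * Φ t)) (hΦ t) (ω • s 0 + x 0)
  refine sub_eq_zero.1 <| eq_zero_of_hasDerivAt_smul_mulVec_of_transpose_eq_neg Jmat_transpose
    (a := u1) (v := fun τ => ω • s τ + x τ - Φ τ *ᵥ (ω • s 0 + x 0)) (fun t => ?_) ?_ t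
  · refine (((hs t).const_smul ω).add (hx t)).sub (hΦv t) |>.congr_deriv ?_
    simp only [mulVec_add, mulVec_sub, mulVec_smul]
    module
  · rw [hΦ0, one_mulVec, sub_self]

theorem gpebo_linear_regression_equation_general
    (ω : ℝ) (u1 : ℝ → ℝ) (q : ℝ → Fin 2 → ℝ)
    (y z1 z2 x : ℝ → Fin 2 → ℝ)
    (hy : ∀ t, HasDerivAt y (q t - x t) t)
    (hx : ∀ t, HasDerivAt x ((u1 t - ω) • Jmat.mulVec (x t)) t)
    (hz1 : ∀ t, HasDerivAt z1 (u1 t • Jmat.mulVec (z1 t) + Jmat.mulVec (q t)) t)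
    (hz2 : ∀ t, HasDerivAt z2 (u1 t • Jmat.mulVec (z2 t - Jmat.mulVec (y t))) t)
    (Φ : ℝ → Matrix (Fin 2) (Fin 2) ℝ)
    (hΦ : ∀ t i j, HasDerivAt (fun τ => Φ τ i j) (u1 t * (Jmat * Φ t) i j) t)
    (hΦ0 : Φ 0 = 1)
    (s : ℝ → Fin 2 → ℝ) (hs : ∀ t, s t = z1 t + z2 t - Jmat.mulVec (y t))
    (θ23 : Fin 2 → ℝ) (hθ23 : θ23 = ω • s 0 + x 0)
    (lam : ℝ)
    (yf qf sf : ℝ → Fin 2 → ℝ) (Φf : ℝ → Matrix (Fin 2) (Fin 2) ℝ)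
    (hyf : ∀ t, HasDerivAt yf (lam • (y t - yf t)) t)
    (hqf : ∀ t, HasDerivAt qf (lam • (q t - qf t)) t)
    (hsf : ∀ t, HasDerivAt sf (lam • (s t - sf t)) t)
    (hΦf : ∀ t i j, HasDerivAt (fun τ => Φf τ i j) (lam * (Φ t i j - Φf t i j)) t)
    (Y : ℝ → Fin 2 → ℝ) (hY : ∀ t, Y t = lam • (y t - yf t) - qf t)
    (Ω : ℝ → Matrix (Fin 2) (Fin 3) ℝ)
    (hΩ : ∀ t, Ω t = Matrix.of fun i j => ![sf t i, -(Φf t i 0), -(Φf t i 1)] j)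
    (θ : Fin 3 → ℝ) (hθ : θ = ![ω, θ23 0, θ23 1]) :
    ∀ t ≥ (0 : ℝ),
      Y t - (Ω t).mulVec θ = Real.exp (-(lam * t)) • (Y 0 - (Ω 0).mulVec θ) ∧
      Real.sqrt (((Y t - (Ω t).mulVec θ) 0) ^ 2 + ((Y t - (Ω t).mulVec θ) 1) ^ 2) ≤
        Real.exp (-(lam * t)) *
          Real.sqrt (((Y 0 - (Ω 0).mulVec θ) 0) ^ 2 + ((Y 0 - (Ω 0).mulVec θ) 1) ^ 2) := by
  have hs' : ∀ t, HasDerivAt s (u1 t • Jmat *ᵥ s t + Jmat *ᵥ x t) t := fun t => by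
    rw [funext hs]
    refine (((hz1 t).add (hz2 t)).sub ((hy t).const_mulVec Jmat)).congr_deriv ?_
    simp only [mulVec_add, mulVec_sub]
    module
  have hrel : ∀ t, ω • s t + x t = Φ t *ᵥ θ23 :=
    hθ23 ▸ smul_add_eq_mulVec_of_hasDerivAt hx hs' hΦ hΦ0
  have hΦfθ : ∀ t, HasDerivAt (fun τ => Φf τ *ᵥ θ23) (lam • (Φ t *ᵥ θ23 - Φf t *ᵥ θ23)) t :=
    fun t => by
      simpa only [smul_mulVec, sub_mulVec] using
        HasDerivAt.mulVec_const (M' := lam • (Φ t - Φf t)) (hΦf t) θ23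
  have hres : ∀ t, Y t - Ω t *ᵥ θ = lam • (y t - yf t) - qf t - (ω • sf t - Φf t *ᵥ θ23) :=
    fun t => by rw [hY, hΩ, hθ, regressor_mulVec]
  have hdecay : ∀ t, HasDerivAt (fun τ => Y τ - Ω τ *ᵥ θ) (-lam • (Y t - Ω t *ᵥ θ)) t :=
    fun t => by
      simp only [hres]
      refine ((((hy t).sub (hyf t)).const_smul lam).sub (hqf t)).sub
        (((hsf t).const_smul ω).sub (hΦfθ t)) |>.congr_deriv ?_
      linear_combination (norm := module) -lam • hrel t
  intro t _
  have hmain := eq_exp_smul_of_hasDerivAt_eq_neg_smul hdecay t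
  refine ⟨hmain, ?_⟩
  rw [hmain]
  exact (Real.sqrt_mul_sq_add_mul_sq (Real.exp_pos _).le _ _).le

/-- second claim of Proposition 1: filtering the measurable relation
through the first-order low-pass filter `F(p) = λ/(p+λ)` yields the linear regression
equation `Y = Ω·θ + ε_t`, where the residual `Y - Ω·θ` decays exponentially at rate `λ`. -/
theorem gpebo_linear_regression_equation
    (ω : ℝ) (u1 : ℝ → ℝ) (q : ℝ → Fin 2 → ℝ)
    (hu1 : Continuous u1) (hq : Continuous q)
    (y z1 z2 x : ℝ → Fin 2 → ℝ)
    (hy : ∀ t, HasDerivAt y (q t - x t) t)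
    (hx : ∀ t, HasDerivAt x ((u1 t - ω) • Jmat.mulVec (x t)) t)
    (hz1 : ∀ t, HasDerivAt z1 (u1 t • Jmat.mulVec (z1 t) + Jmat.mulVec (q t)) t)
    (hz2 : ∀ t, HasDerivAt z2 (u1 t • Jmat.mulVec (z2 t - Jmat.mulVec (y t))) t)
    (Φ : ℝ → Matrix (Fin 2) (Fin 2) ℝ)
    (hΦ : ∀ t i j, HasDerivAt (fun τ => Φ τ i j) (u1 t * (Jmat * Φ t) i j) t)
    (hΦ0 : Φ 0 = 1)
    (s : ℝ → Fin 2 → ℝ) (hs : ∀ t, s t = z1 t + z2 t - Jmat.mulVec (y t))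
    (θ23 : Fin 2 → ℝ) (hθ23 : θ23 = ω • s 0 + x 0)
    (lam : ℝ) (hlam : 0 < lam)
    (yf qf sf : ℝ → Fin 2 → ℝ) (Φf : ℝ → Matrix (Fin 2) (Fin 2) ℝ)
    (hyf : ∀ t, HasDerivAt yf (lam • (y t - yf t)) t)
    (hqf : ∀ t, HasDerivAt qf (lam • (q t - qf t)) t)
    (hsf : ∀ t, HasDerivAt sf (lam • (s t - sf t)) t)
    (hΦf : ∀ t i j, HasDerivAt (fun τ => Φf τ i j) (lam * (Φ t i j - Φf t i j)) t)
    (Y : ℝ → Fin 2 → ℝ) (hY : ∀ t, Y t = lam • (y t - yf t) - qf t)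
    (Ω : ℝ → Matrix (Fin 2) (Fin 3) ℝ)
    (hΩ : ∀ t, Ω t = Matrix.of fun i j => ![sf t i, -(Φf t i 0), -(Φf t i 1)] j)
    (θ : Fin 3 → ℝ) (hθ : θ = ![ω, θ23 0, θ23 1]) :
    ∀ t ≥ (0 : ℝ),
      Y t - (Ω t).mulVec θ = Real.exp (-(lam * t)) • (Y 0 - (Ω 0).mulVec θ) ∧
      Real.sqrt (((Y t - (Ω t).mulVec θ) 0) ^ 2 + ((Y t - (Ω t).mulVec θ) 1) ^ 2) ≤
        Real.exp (-(lam * t)) *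
          Real.sqrt (((Y 0 - (Ω 0).mulVec θ) 0) ^ 2 + ((Y 0 - (Ω 0).mulVec θ) 1) ^ 2) :=
  gpebo_linear_regression_equation_general ω u1 q y z1 z2 x hy hx hz1 hz2 Φ hΦ hΦ0 s hs θ23 hθ23 lam
    yf qf sf Φf hyf hqf hsf hΦf Y hY Ω hΩ θ hθ
end

section
/- Let n ≥ 1 and let K_P, K_I ∈ M_n(ℝ) be symmetric positive definite matrices. Then every λ ∈ ℂ satisfying det(λ²·I_n + λ·K_P + K_I) = 0 (determinant of the complex matrix obtained by regarding K_P, K_I as complex matrices) has strictly negative real part. -/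
/-!
If `det (λ² + λ P + Q) = 0`, pick a kernel vector `v ≠ 0`. Pairing with `v*` gives the scalar
equation `a λ² + b λ + c = 0` with `a = v* v`, `b = v* P v`, `c = v* Q v` all positive reals.
Its imaginary part reads `Im λ · (2 a Re λ + b) = 0`, so `Re λ ≥ 0` would force `λ` real, and a
quadratic with positive coefficients has no nonnegative real root. A real symmetric positive
definite matrix stays positive definite over `ℂ`, since its Hermitian form at `x + i y` is the sum
of its real forms at `x` and at `y`.
-/

open Matrix Complex
open scoped ComplexOrder

namespace Complex

theorem re_neg_of_mul_sq_add_mul_add_eq_zero {a b c z : ℂ} (ha : 0 < a) (hb : 0 < b)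
    (hc : 0 < c) (h : a * z ^ 2 + b * z + c = 0) : z.re < 0 := by
  obtain ⟨ha, ha'⟩ := pos_iff.mp ha
  obtain ⟨hb, hb'⟩ := pos_iff.mp hb
  obtain ⟨hc, hc'⟩ := pos_iff.mp hc
  have hre := congrArg re h
  have him := congrArg im h
  simp only [sq, add_re, add_im, mul_re, mul_im, ← ha', ← hb', ← hc', zero_re, zero_im] at hre him
  by_contra! hz
  have him_zero : z.im = 0 := by
    have : z.im * (2 * a.re * z.re + b.re) = 0 := by linarith
    exact (mul_eq_zero.mp this).resolve_right (by positivity)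
  rw [him_zero] at hre
  nlinarith [mul_nonneg ha.le (mul_nonneg hz hz), mul_nonneg hb.le hz]

end Complex

namespace Matrix

variable {n : Type*} [Fintype n]

lemma IsSymm.dotProduct_mulVec_comm {R : Type*} [CommSemiring R] {K : Matrix n n R}
    (hK : K.IsSymm) (x y : n → R) : x ⬝ᵥ K *ᵥ y = y ⬝ᵥ K *ᵥ x := by
  rw [dotProduct_mulVec, ← mulVec_transpose, hK.eq, dotProduct_comm]

lemma map_ofReal_mulVec (K : Matrix n n ℝ) (x : n → ℝ) :
    K.map ofReal *ᵥ (ofReal ∘ x) = ofReal ∘ (K *ᵥ x) :=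
  funext fun i ↦ (ofRealHom.map_mulVec K x i).symm

lemma ofReal_comp_dotProduct (x y : n → ℝ) : (ofReal ∘ x) ⬝ᵥ (ofReal ∘ y) = ↑(x ⬝ᵥ y) :=
  (ofRealHom.map_dotProduct x y).symm

omit [Fintype n] in
lemma star_ofReal_comp (x : n → ℝ) : star (ofReal ∘ x) = ofReal ∘ x :=
  funext fun i ↦ conj_ofReal (x i)

lemma IsSymm.star_dotProduct_map_ofReal_mulVec {K : Matrix n n ℝ} (hK : K.IsSymm)
    (x y : n → ℝ) :
    star (ofReal ∘ x + I • ofReal ∘ y) ⬝ᵥ K.map ofReal *ᵥ (ofReal ∘ x + I • ofReal ∘ y) =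
      ↑(x ⬝ᵥ K *ᵥ x + y ⬝ᵥ K *ᵥ y) := by
  simp only [star_add, star_smul, star_ofReal_comp, star_def, conj_I, mulVec_add, mulVec_smul,
    map_ofReal_mulVec, add_dotProduct, dotProduct_add, smul_dotProduct, dotProduct_smul,
    ofReal_comp_dotProduct, hK.dotProduct_mulVec_comm y x, smul_eq_mul]
  push_cast
  linear_combination -((y ⬝ᵥ K *ᵥ y : ℝ) : ℂ) * I_mul_I

theorem PosDef.map_ofReal {K : Matrix n n ℝ} (hK : K.PosDef) : (K.map ofReal).PosDef := by
  refine .of_dotProduct_mulVec_pos (hK.isHermitian.map _ fun _ ↦ (conj_ofReal _).symm)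
    fun v hv ↦ ?_
  have hv_eq : v = ofReal ∘ (re ∘ v) + I • ofReal ∘ (im ∘ v) := by
    funext i; apply Complex.ext <;> simp
  have hK_symm : K.IsSymm := isHermitian_iff_isSymm.mp hK.isHermitian
  rw [hv_eq, hK_symm.star_dotProduct_map_ofReal_mulVec, zero_lt_real]
  have hre_or_him : re ∘ v ≠ 0 ∨ im ∘ v ≠ 0 := by
    by_contra! h
    exact hv (by rw [hv_eq, h.1, h.2]; simp)
  have hnonneg (x : n → ℝ) : 0 ≤ x ⬝ᵥ K *ᵥ x := by
    simpa using hK.posSemidef.dotProduct_mulVec_nonneg x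
  have hpos {x : n → ℝ} (hx : x ≠ 0) : 0 < x ⬝ᵥ K *ᵥ x := by
    simpa using hK.dotProduct_mulVec_pos hx
  rcases hre_or_him with h | h
  · exact add_pos_of_pos_of_nonneg (hpos h) (hnonneg _)
  · exact add_pos_of_nonneg_of_pos (hnonneg _) (hpos h)

theorem re_neg_of_det_sq_smul_add_smul_add_eq_zero [DecidableEq n] {P Q : Matrix n n ℂ}
    (hP : P.PosDef) (hQ : Q.PosDef) {z : ℂ}
    (h : (z ^ 2 • (1 : Matrix n n ℂ) + z • P + Q).det = 0) : z.re < 0 := by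
  obtain ⟨v, hv, hMv⟩ := exists_mulVec_eq_zero_iff.mpr h
  refine re_neg_of_mul_sq_add_mul_add_eq_zero (dotProduct_star_self_pos_iff.mpr hv)
    (hP.dotProduct_mulVec_pos hv) (hQ.dotProduct_mulVec_pos hv) ?_
  have hform := congrArg (star v ⬝ᵥ ·) hMv
  simpa [add_mulVec, smul_mulVec, dotProduct_add, dotProduct_smul, mul_comm] using hform

end Matrix

theorem quadratic_matrix_pencil_roots_stable_general
    (n : ℕ) (KP KI : Matrix (Fin n) (Fin n) ℝ)
    (hKP : KP.PosDef) (hKI : KI.PosDef)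
    (lam : ℂ)
    (h : (lam ^ 2 • (1 : Matrix (Fin n) (Fin n) ℂ) +
          lam • KP.map (Complex.ofReal ·) + KI.map (Complex.ofReal ·)).det = 0) :
    lam.re < 0 :=
  re_neg_of_det_sq_smul_add_smul_add_eq_zero hKP.map_ofReal hKI.map_ofReal h

/-- for symmetric positive definite `K_P, K_I ∈ M_n(ℝ)`, every root
`λ ∈ ℂ` of `det(λ²·I + λ·K_P + K_I) = 0` has strictly negative real part. -/
theorem quadratic_matrix_pencil_roots_stable
    (n : ℕ) (hn : 1 ≤ n) (KP KI : Matrix (Fin n) (Fin n) ℝ)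
    (hKPs : KP.IsSymm) (hKIs : KI.IsSymm)
    (hKP : KP.PosDef) (hKI : KI.PosDef)
    (lam : ℂ)
    (h : (lam ^ 2 • (1 : Matrix (Fin n) (Fin n) ℂ) +
          lam • KP.map (Complex.ofReal ·) + KI.map (Complex.ofReal ·)).det = 0) :
    lam.re < 0 :=
  quadratic_matrix_pencil_roots_stable_general n KP KI hKP hKI lam h
end

section
/- Let n ≥ 1 and let K_P, K_I ∈ M_n(ℝ) be symmetric positive definite matrices. Then there exist constants c > 0 and γ > 0, depending only on K_P and K_I, such that every twice-differentiable function x : ℝ → ℝⁿ satisfying x''(t) + K_P·x'(t) + K_I·x(t) = 0 for all t obeys ‖x(t)‖ + ‖x'(t)‖ ≤ c·e^{−γt}·(‖x(0)‖ + ‖x'(0)‖) for all t ≥ 0. -/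
/-!
Along a solution, `V = ‖x'‖² + ⟪K_I x, x⟫ + ε (2⟪x, x'⟫ + ⟪K_P x, x⟫)` has derivative
`-2⟪K_P x', x'⟫ + 2ε‖x'‖² - 2ε⟪K_I x, x⟫`. For small `ε > 0` coercivity of `K_P` and `K_I`
makes `V` comparable to `‖x‖² + ‖x'‖²` and its derivative at most `-γ V`, so `V`, and with it
`‖x‖ + ‖x'‖`, decays exponentially. Positive definite matrices are coercive because the unit
sphere of `ℝⁿ` is compact.
-/

open Matrix

/-- Euclidean norm of a vector in `ℝⁿ` (represented as `Fin n → ℝ`). -/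
noncomputable def euclidEnorm {n : ℕ} (v : Fin n → ℝ) : ℝ := Real.sqrt (∑ i, v i ^ 2)

open Real
open scoped RealInnerProductSpace

theorem le_exp_mul_of_hasDerivAt_le_neg_mul {V V' : ℝ → ℝ} {γ : ℝ}
    (hV : ∀ t, HasDerivAt V (V' t) t) (hV' : ∀ t, V' t ≤ -γ * V t) {t : ℝ} (ht : 0 ≤ t) :
    V t ≤ exp (-(γ * t)) * V 0 := by
  have hanti : Antitone fun s => exp (γ * s) * V s := by
    refine antitone_of_hasDerivAt_nonpos
      (f' := fun s => exp (γ * s) * γ * V s + exp (γ * s) * V' s) (fun s => ?_) fun s => ?_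
    · simpa using ((hasDerivAt_id s).const_mul γ).exp.fun_mul (hV s)
    · simp only [Pi.zero_apply]
      nlinarith [hV' s, exp_pos (γ * s)]
  have hmono := hanti ht
  simp only [mul_zero, exp_zero, one_mul] at hmono
  calc V t = exp (-(γ * t)) * (exp (γ * t) * V t) := by
        rw [← mul_assoc, ← exp_add, neg_add_cancel, exp_zero, one_mul]
    _ ≤ exp (-(γ * t)) * V 0 := by gcongr

theorem add_le_sqrt_two_mul_of_sq_add_sq_le {a b a₀ b₀ k : ℝ} (ha : 0 ≤ a) (hb : 0 ≤ b)
    (ha₀ : 0 ≤ a₀) (hb₀ : 0 ≤ b₀) (hk : 0 ≤ k) (h : a ^ 2 + b ^ 2 ≤ k ^ 2 * (a₀ ^ 2 + b₀ ^ 2)) :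
    a + b ≤ √2 * k * (a₀ + b₀) := by
  refine (pow_le_pow_iff_left₀ (by positivity) (by positivity) two_ne_zero).mp ?_
  rw [mul_pow, mul_pow, sq_sqrt zero_le_two]
  nlinarith [sq_nonneg (a - b), mul_nonneg (sq_nonneg k) (mul_nonneg ha₀ hb₀)]

section

variable {E : Type*} [NormedAddCommGroup E] [InnerProductSpace ℝ E]

theorem isCoercive_of_forall_pos [FiniteDimensional ℝ E] (B : E →L[ℝ] E →L[ℝ] ℝ)
    (hB : ∀ u ≠ 0, 0 < B u u) : IsCoercive B := by
  obtain ⟨C, hC, hCB⟩ := (isCompact_sphere (0 : E) 1).exists_forall_le'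
    (show Continuous fun u => B u u by fun_prop).continuousOn
    fun u hu => hB u (ne_zero_of_mem_unit_sphere ⟨u, hu⟩)
  refine ⟨C, hC, fun u => ?_⟩
  rcases eq_or_ne u 0 with rfl | hu
  · simp
  have hnu : 0 < ‖u‖ := norm_pos_iff.mpr hu
  have hunit := hCB (‖u‖⁻¹ • u) (by simp [norm_smul, hnu.ne'])
  rw [map_smul, map_smul, _root_.smul_apply, smul_eq_mul, smul_eq_mul] at hunit
  calc C * ‖u‖ * ‖u‖ ≤ ‖u‖⁻¹ * (‖u‖⁻¹ * B u u) * ‖u‖ * ‖u‖ := by gcongr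
    _ = B u u := by field_simp

variable (P Q : E →L[ℝ] E)

def secondOrderLyapunov (ε : ℝ) (x v : E) : ℝ :=
  ‖v‖ ^ 2 + 2 * ε * ⟪x, v⟫ + ⟪Q x, x⟫ + ε * ⟪P x, x⟫

variable {P Q}

theorem hasDerivAt_secondOrderLyapunov (hP : (P : E →ₗ[ℝ] E).IsSymmetric)
    (hQ : (Q : E →ₗ[ℝ] E).IsSymmetric) (ε : ℝ) {x y : ℝ → E} {a : E} {t : ℝ}
    (hx : HasDerivAt x (y t) t) (hy : HasDerivAt y a t) (hode : a + P (y t) + Q (x t) = 0) :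
    HasDerivAt (fun s => secondOrderLyapunov P Q ε (x s) (y s))
      (2 * ε * ‖y t‖ ^ 2 - 2 * ⟪P (y t), y t⟫ - 2 * ε * ⟪Q (x t), x t⟫) t := by
  have hPx := P.hasFDerivAt.comp_hasDerivAt t hx
  have hQx := Q.hasFDerivAt.comp_hasDerivAt t hx
  refine (((hy.norm_sq.add ((hx.inner ℝ hy).const_mul (2 * ε))).add (hQx.inner ℝ hx)).add
    ((hPx.inner ℝ hx).const_mul ε)).congr_deriv ?_
  rw [eq_sub_of_add_eq (eq_neg_of_add_eq_zero_left hode)]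
  have hPxy : ⟪x t, P (y t)⟫ = ⟪y t, P (x t)⟫ := (hP _ _).symm.trans (real_inner_comm _ _).symm
  have hQxy : ⟪x t, Q (y t)⟫ = ⟪y t, Q (x t)⟫ := (hQ _ _).symm.trans (real_inner_comm _ _).symm
  simp only [Function.comp_apply, inner_sub_right, inner_neg_right, real_inner_self_eq_norm_sq,
    real_inner_comm (x t), real_inner_comm (y t), hPxy, hQxy]
  ring

theorem secondOrderLyapunov_le {ε : ℝ} (hε : 0 ≤ ε) (x v : E) :
    secondOrderLyapunov P Q ε x v ≤ (1 + ε) * ‖v‖ ^ 2 + (ε + ‖Q‖ + ε * ‖P‖) * ‖x‖ ^ 2 := by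
  have hsq := norm_sub_sq_real x v
  have hT : ∀ T : E →L[ℝ] E, ⟪T x, x⟫ ≤ ‖T‖ * ‖x‖ ^ 2 := fun T =>
    calc ⟪T x, x⟫ ≤ ‖T x‖ * ‖x‖ := real_inner_le_norm _ _
      _ ≤ ‖T‖ * ‖x‖ * ‖x‖ := by gcongr; exact T.le_opNorm x
      _ = ‖T‖ * ‖x‖ ^ 2 := by ring
  unfold secondOrderLyapunov
  nlinarith [mul_nonneg hε (sq_nonneg ‖x - v‖), hT Q, mul_le_mul_of_nonneg_left (hT P) hε]

theorem le_secondOrderLyapunov {ε : ℝ} (hε : 0 ≤ ε) {μ : ℝ} (hP : ∀ v, 0 ≤ ⟪P v, v⟫)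
    (hQ : ∀ v, μ * ‖v‖ ^ 2 ≤ ⟪Q v, v⟫) (x v : E) :
    (1 - ε) * ‖v‖ ^ 2 + (μ - ε) * ‖x‖ ^ 2 ≤ secondOrderLyapunov P Q ε x v := by
  have hsq := norm_add_sq_real x v
  unfold secondOrderLyapunov
  nlinarith [mul_nonneg hε (sq_nonneg ‖x + v‖), hQ x, mul_nonneg hε (hP x)]

theorem sq_norm_add_sq_norm_decay (hPs : (P : E →ₗ[ℝ] E).IsSymmetric)
    (hQs : (Q : E →ₗ[ℝ] E).IsSymmetric)
    {μP μQ ε : ℝ} (hP : ∀ v, μP * ‖v‖ ^ 2 ≤ ⟪P v, v⟫) (hQ : ∀ v, μQ * ‖v‖ ^ 2 ≤ ⟪Q v, v⟫)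
    (hε : 0 < ε) (hε_half : ε ≤ 1 / 2) (hεP : 2 * ε ≤ μP) (hεQ : 2 * ε ≤ μQ)
    {x x' x'' : ℝ → E} (hx : ∀ t, HasDerivAt x (x' t) t) (hx' : ∀ t, HasDerivAt x' (x'' t) t)
    (hode : ∀ t, x'' t + P (x' t) + Q (x t) = 0) {t : ℝ} (ht : 0 ≤ t) :
    ε * (‖x t‖ ^ 2 + ‖x' t‖ ^ 2) ≤
      exp (-(4 * ε ^ 2 / (2 + ‖P‖ + ‖Q‖) * t)) *
        ((2 + ‖P‖ + ‖Q‖) * (‖x 0‖ ^ 2 + ‖x' 0‖ ^ 2)) := by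
  set β := 2 + ‖P‖ + ‖Q‖
  have hβ : 0 < β := by positivity
  have hP_nonneg : ∀ v, 0 ≤ ⟪P v, v⟫ := fun v =>
    (mul_nonneg (by linarith) (sq_nonneg _)).trans (hP v)
  have hV_le (s : ℝ) :
      secondOrderLyapunov P Q ε (x s) (x' s) ≤ β * (‖x s‖ ^ 2 + ‖x' s‖ ^ 2) := by
    have hε1 : 0 ≤ 1 - ε := by linarith
    nlinarith [secondOrderLyapunov_le (P := P) (Q := Q) hε.le (x s) (x' s), sq_nonneg ‖x s‖,
      sq_nonneg ‖x' s‖, mul_nonneg (mul_nonneg hε1 (norm_nonneg P)) (sq_nonneg ‖x s‖),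
      mul_nonneg (norm_nonneg P) (sq_nonneg ‖x' s‖), mul_nonneg (norm_nonneg Q) (sq_nonneg ‖x' s‖)]
  have hle_V (s : ℝ) :
      ε * (‖x s‖ ^ 2 + ‖x' s‖ ^ 2) ≤ secondOrderLyapunov P Q ε (x s) (x' s) := by
    nlinarith [le_secondOrderLyapunov hε.le hP_nonneg hQ (x s) (x' s), sq_nonneg ‖x s‖,
      sq_nonneg ‖x' s‖]
  -- `V' ≤ -4ε² (‖x‖² + ‖x'‖²)` by coercivity, `2ε ≤ μP, μQ` and `ε ≤ 1/2`,
  -- and `V ≤ β (‖x‖² + ‖x'‖²)` turns this into `V' ≤ -(4ε²/β) V`.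
  have hderiv_le (s : ℝ) :
      2 * ε * ‖x' s‖ ^ 2 - 2 * ⟪P (x' s), x' s⟫ - 2 * ε * ⟪Q (x s), x s⟫ ≤
        -(4 * ε ^ 2 / β) * secondOrderLyapunov P Q ε (x s) (x' s) := by
    have hN : secondOrderLyapunov P Q ε (x s) (x' s) / β ≤ ‖x s‖ ^ 2 + ‖x' s‖ ^ 2 :=
      (div_le_iff₀' hβ).mpr (hV_le s)
    rw [neg_mul, div_mul_eq_mul_div, mul_div_assoc]
    nlinarith [hP (x' s), hQ (x s), mul_le_mul_of_nonneg_right hεP (sq_nonneg ‖x' s‖),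
      mul_le_mul_of_nonneg_right (mul_le_mul_of_nonneg_left hεQ hε.le) (sq_nonneg ‖x s‖),
      mul_le_mul_of_nonneg_left hN (by positivity : 0 ≤ 4 * ε ^ 2),
      mul_le_mul_of_nonneg_right (mul_le_mul_of_nonneg_left hε_half hε.le) (sq_nonneg ‖x' s‖)]
  calc ε * (‖x t‖ ^ 2 + ‖x' t‖ ^ 2) ≤ secondOrderLyapunov P Q ε (x t) (x' t) := hle_V t
    _ ≤ exp (-(4 * ε ^ 2 / β * t)) * secondOrderLyapunov P Q ε (x 0) (x' 0) :=
      le_exp_mul_of_hasDerivAt_le_neg_mul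
        (fun s => hasDerivAt_secondOrderLyapunov hPs hQs ε (hx s) (hx' s) (hode s)) hderiv_le ht
    _ ≤ exp (-(4 * ε ^ 2 / β * t)) * (β * (‖x 0‖ ^ 2 + ‖x' 0‖ ^ 2)) := by gcongr; exact hV_le 0

theorem exists_exp_decay_of_isCoercive (hPs : (P : E →ₗ[ℝ] E).IsSymmetric)
    (hQs : (Q : E →ₗ[ℝ] E).IsSymmetric) (hP : IsCoercive ((innerSL ℝ).comp P))
    (hQ : IsCoercive ((innerSL ℝ).comp Q)) :
    ∃ c > (0 : ℝ), ∃ γ > (0 : ℝ), ∀ x x' x'' : ℝ → E,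
      (∀ t, HasDerivAt x (x' t) t) → (∀ t, HasDerivAt x' (x'' t) t) →
      (∀ t, x'' t + P (x' t) + Q (x t) = 0) →
      ∀ t ≥ (0 : ℝ), ‖x t‖ + ‖x' t‖ ≤ c * exp (-(γ * t)) * (‖x 0‖ + ‖x' 0‖) := by
  obtain ⟨μP, hμP, hP⟩ := hP
  obtain ⟨μQ, hμQ, hQ⟩ := hQ
  set ε := min (1 / 2) (min (μP / 2) (μQ / 2))
  set β := 2 + ‖P‖ + ‖Q‖
  have hε : 0 < ε := lt_min one_half_pos (lt_min (half_pos hμP) (half_pos hμQ))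
  have hεP : ε ≤ μP / 2 := (min_le_right _ _).trans (min_le_left _ _)
  have hεQ : ε ≤ μQ / 2 := (min_le_right _ _).trans (min_le_right _ _)
  have hβ : 0 < β := by positivity
  refine ⟨√2 * √(β / ε), by positivity, 2 * ε ^ 2 / β, by positivity, ?_⟩
  intro x x' x'' hx hx' hode t ht
  have hdecay := sq_norm_add_sq_norm_decay hPs hQs (fun v => by rw [sq, ← mul_assoc]; exact hP v)
    (fun v => by rw [sq, ← mul_assoc]; exact hQ v) hε (min_le_left _ _) (by linarith)
    (by linarith) hx hx' hode ht
  have hk : (√(β / ε) * exp (-(2 * ε ^ 2 / β * t))) ^ 2 = β / ε * exp (-(4 * ε ^ 2 / β * t)) := by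
    rw [mul_pow, sq_sqrt (by positivity), ← exp_nat_mul]
    ring_nf
  calc ‖x t‖ + ‖x' t‖ ≤ √2 * (√(β / ε) * exp (-(2 * ε ^ 2 / β * t))) * (‖x 0‖ + ‖x' 0‖) := by
        refine add_le_sqrt_two_mul_of_sq_add_sq_le (norm_nonneg _) (norm_nonneg _) (norm_nonneg _)
          (norm_nonneg _) (by positivity) ?_
        rw [hk, div_mul_eq_mul_div, div_mul_eq_mul_div, le_div_iff₀' hε]
        linarith
    _ = √2 * √(β / ε) * exp (-(2 * ε ^ 2 / β * t)) * (‖x 0‖ + ‖x' 0‖) := by ring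

end

theorem Matrix.PosDef.isCoercive_innerSL_comp_toEuclideanCLM {ι : Type*} [Fintype ι]
    [DecidableEq ι] {A : Matrix ι ι ℝ} (hA : A.PosDef) :
    IsCoercive ((innerSL ℝ).comp (toEuclideanCLM (𝕜 := ℝ) A)) := by
  refine isCoercive_of_forall_pos _ fun u hu => ?_
  have hu' : WithLp.ofLp u ≠ 0 := by simpa using hu
  simpa [real_inner_comm, inner_toEuclideanCLM] using hA.dotProduct_mulVec_pos hu'

theorem Matrix.PosDef.isSymmetric_toEuclideanCLM {ι : Type*} [Fintype ι] [DecidableEq ι]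
    {A : Matrix ι ι ℝ} (hA : A.PosDef) :
    ((toEuclideanCLM (𝕜 := ℝ) A : EuclideanSpace ℝ ι →L[ℝ] EuclideanSpace ℝ ι) :
      EuclideanSpace ℝ ι →ₗ[ℝ] EuclideanSpace ℝ ι).IsSymmetric :=
  isSymmetric_toEuclideanLin_iff.mpr hA.isHermitian

theorem euclidEnorm_eq_norm {n : ℕ} (v : Fin n → ℝ) :
    euclidEnorm v = ‖(WithLp.toLp 2 v : EuclideanSpace ℝ (Fin n))‖ := by
  simp [euclidEnorm, EuclideanSpace.norm_eq]

theorem HasDerivAt.toLp {ι : Type*} [Fintype ι] {f : ℝ → ι → ℝ} {f' : ι → ℝ} {t : ℝ}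
    (hf : HasDerivAt f f' t) :
    HasDerivAt (fun s => (WithLp.toLp 2 (f s) : EuclideanSpace ℝ ι)) (WithLp.toLp 2 f') t :=
  (PiLp.hasFDerivAt_toLp 2 (f t)).comp_hasDerivAt t hf

theorem second_order_system_exponentially_stable_general
    (n : ℕ) (KP KI : Matrix (Fin n) (Fin n) ℝ)
    (hKP : KP.PosDef) (hKI : KI.PosDef) :
    ∃ c > (0 : ℝ), ∃ γ > (0 : ℝ),
      ∀ (x x' x'' : ℝ → Fin n → ℝ),
        (∀ t, HasDerivAt x (x' t) t) →
        (∀ t, HasDerivAt x' (x'' t) t) →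
        (∀ t, x'' t + KP.mulVec (x' t) + KI.mulVec (x t) = 0) →
        ∀ t ≥ (0 : ℝ),
          euclidEnorm (x t) + euclidEnorm (x' t) ≤
            c * Real.exp (-(γ * t)) * (euclidEnorm (x 0) + euclidEnorm (x' 0)) := by
  obtain ⟨c, hc, γ, hγ, hdecay⟩ := exists_exp_decay_of_isCoercive hKP.isSymmetric_toEuclideanCLM
    hKI.isSymmetric_toEuclideanCLM hKP.isCoercive_innerSL_comp_toEuclideanCLM
    hKI.isCoercive_innerSL_comp_toEuclideanCLM
  refine ⟨c, hc, γ, hγ, fun x x' x'' hx hx' hode t ht => ?_⟩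
  simp only [euclidEnorm_eq_norm]
  refine hdecay _ _ _ (fun s => (hx s).toLp) (fun s => (hx' s).toLp) (fun s => ?_) t ht
  rw [toEuclideanCLM_toLp, toEuclideanCLM_toLp, ← WithLp.toLp_add, ← WithLp.toLp_add, hode,
    WithLp.toLp_zero]

/-- exponential stability of `x'' + K_P x' + K_I x = 0` for symmetric
positive definite `K_P, K_I`: there are constants `c, γ > 0`, depending only on
`K_P` and `K_I`, bounding every solution. -/
theorem second_order_system_exponentially_stable
    (n : ℕ) (hn : 1 ≤ n) (KP KI : Matrix (Fin n) (Fin n) ℝ)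
    (hKPs : KP.IsSymm) (hKIs : KI.IsSymm)
    (hKP : KP.PosDef) (hKI : KI.PosDef) :
    ∃ c > (0 : ℝ), ∃ γ > (0 : ℝ),
      ∀ (x x' x'' : ℝ → Fin n → ℝ),
        (∀ t, HasDerivAt x (x' t) t) →
        (∀ t, HasDerivAt x' (x'' t) t) →
        (∀ t, x'' t + KP.mulVec (x' t) + KI.mulVec (x t) = 0) →
        ∀ t ≥ (0 : ℝ),
          euclidEnorm (x t) + euclidEnorm (x' t) ≤
            c * Real.exp (-(γ * t)) * (euclidEnorm (x 0) + euclidEnorm (x' 0)) :=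
  second_order_system_exponentially_stable_general n KP KI hKP hKI
end

section
/- Let m, n ≥ 1 and let Ω : ℝ → M_{m×n}(ℝ) be continuous and bounded (there is B > 0 with ‖Ω(t)‖ ≤ B for all t ≥ 0), and persistently exciting: there exist T > 0 and C_c > 0 such that ∫_t^{t+T} Ω(s)ᵀΩ(s) ds ⪰ C_c·I_n (i.e. the matrix ∫_t^{t+T} ΩᵀΩ ds − C_c·I_n is positive semidefinite) for all t ≥ 0. Then there exist constants c > 0 and γ > 0, depending only on B, T, C_c, such that every differentiable θ̃ : ℝ → ℝⁿ satisfying θ̃'(t) = −Ω(t)ᵀ·Ω(t)·θ̃(t) for all t ≥ 0 obeys ‖θ̃(t)‖ ≤ c·e^{−γt}·‖θ̃(0)‖ for all t ≥ 0. -/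
open Matrix

/-- Euclidean norm of a vector in `ℝⁿ` (represented as `Fin n → ℝ`). -/
noncomputable def enorm' {n : ℕ} (v : Fin n → ℝ) : ℝ := Real.sqrt (∑ i, v i ^ 2)

/-- Frobenius norm of a real `m × n` matrix. -/
noncomputable def frobNorm {m n : ℕ} (M : Matrix (Fin m) (Fin n) ℝ) : ℝ :=
  Real.sqrt (∑ i, ∑ j, M i j ^ 2)

/-!
Along the flow, `V = ‖θ‖²` satisfies `V' = -2 ‖Ω θ‖²`, so `V` is nonincreasing and
`V(t) - V(t + T) = 2 G` with `G = ∫_t^{t+T} ‖Ω θ‖²`. Within a window the trajectory can only drift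
by `‖θ(s) - θ(t)‖² ≤ B² T G` (Cauchy–Schwarz on `θ' = -Ωᵀ Ω θ`), so persistency of excitation,
applied to the frozen vector `θ(t)`, gives `C_c V(t) ≤ 2 (1 + B⁴ T²) G`. Hence `V` contracts by the
fixed factor `1 + C_c / (1 + B⁴ T²)` over every window of length `T`.
-/

open Set Real intervalIntegral

theorem sq_intervalIntegral_le_mul_integral_sq {f : ℝ → ℝ} {a b : ℝ} (hab : a ≤ b)
    (hf : ContinuousOn f (Icc a b)) :
    (∫ s in a..b, f s) ^ 2 ≤ (b - a) * ∫ s in a..b, f s ^ 2 := by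
  rcases hab.eq_or_lt with rfl | hlt
  · simp
  rw [← uIcc_of_le hab] at hf
  have hf₁ := hf.intervalIntegrable (μ := MeasureTheory.volume)
  have hf₂ : IntervalIntegrable (fun s => f s ^ 2) MeasureTheory.volume a b :=
    (hf.pow 2).intervalIntegrable
  set I := ∫ s in a..b, f s
  have hexp : ∫ s in a..b, ((b - a) * f s - I) ^ 2
      = (b - a) * ((b - a) * (∫ s in a..b, f s ^ 2) - I ^ 2) := by
    have hpt : ∀ s, ((b - a) * f s - I) ^ 2
        = (b - a) ^ 2 * f s ^ 2 - 2 * (b - a) * I * f s + I ^ 2 := fun s => by ring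
    simp_rw [hpt]
    rw [integral_add ((hf₂.const_mul _).sub (hf₁.const_mul _)) intervalIntegrable_const,
      integral_sub (hf₂.const_mul _) (hf₁.const_mul _), integral_const_mul, integral_const_mul,
      integral_const, smul_eq_mul]
    ring
  have h0 : 0 ≤ ∫ s in a..b, ((b - a) * f s - I) ^ 2 :=
    integral_nonneg hab fun _ _ => sq_nonneg _
  rw [hexp] at h0
  have := nonneg_of_mul_nonneg_right h0 (sub_pos.2 hlt)
  linarith

theorem norm_intervalIntegral_sq_le {E : Type*} [NormedAddCommGroup E] [NormedSpace ℝ E]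
    {f : ℝ → E} {a b : ℝ} (hab : a ≤ b) (hf : ContinuousOn f (Icc a b)) :
    ‖∫ s in a..b, f s‖ ^ 2 ≤ (b - a) * ∫ s in a..b, ‖f s‖ ^ 2 :=
  (pow_le_pow_left₀ (norm_nonneg _) (norm_integral_le_integral_norm hab) 2).trans
    (sq_intervalIntegral_le_mul_integral_sq hab hf.norm)

theorem AntitoneOn.le_mul_exp_of_mul_le_shift {V : ℝ → ℝ} {T q : ℝ}
    (hV : AntitoneOn V (Ici 0)) (hV₀ : 0 ≤ V 0) (hT : 0 < T) (hq : 1 ≤ q)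
    (hcontr : ∀ t ≥ 0, q * V (t + T) ≤ V t) {t : ℝ} (ht : 0 ≤ t) :
    V t ≤ q * exp (-(log q / T * t)) * V 0 := by
  have hq₀ : 0 < q := one_pos.trans_le hq
  have hiter : ∀ k : ℕ, q ^ k * V (k * T) ≤ V 0 := by
    intro k
    induction k with
    | zero => simp
    | succ k ih =>
      calc q ^ (k + 1) * V ((k + 1 : ℕ) * T) = q ^ k * (q * V (k * T + T)) := by
            push_cast; ring_nf
        _ ≤ q ^ k * V (k * T) := by gcongr; exact hcontr _ (by positivity)
        _ ≤ V 0 := ih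
  set k := ⌊t / T⌋₊
  have hkt : k * T ≤ t := (le_div_iff₀ hT).1 (Nat.floor_le (by positivity))
  have hpow : q ^ (t / T - 1) ≤ q ^ k := by
    rw [← rpow_natCast]
    exact rpow_le_rpow_of_exponent_le hq (by linarith [Nat.lt_floor_add_one (t / T)])
  have hexp : q ^ (t / T - 1) = q⁻¹ * exp (log q / T * t) := by
    rw [rpow_sub hq₀, rpow_one, rpow_def_of_pos hq₀]
    field_simp
  calc V t ≤ V (k * T) := hV (mem_Ici.2 (by positivity)) ht hkt
    _ ≤ V 0 / q ^ k := by rw [le_div_iff₀' (pow_pos hq₀ k)]; exact hiter k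
    _ ≤ V 0 / q ^ (t / T - 1) := by gcongr
    _ = q * exp (-(log q / T * t)) * V 0 := by
        rw [hexp, exp_neg]; field_simp

open scoped InnerProduct

section GradientFlow

variable {E F : Type*} [NormedAddCommGroup E] [InnerProductSpace ℝ E]
  [NormedAddCommGroup F] [InnerProductSpace ℝ F]

def IsPersistentlyExciting (A : ℝ → E →L[ℝ] F) (T Cc : ℝ) : Prop :=
  ∀ t ≥ 0, ∀ x, Cc * ‖x‖ ^ 2 ≤ ∫ s in t..t + T, ‖A s x‖ ^ 2

variable [CompleteSpace E] [CompleteSpace F]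

/-- The gradient flow of the time-varying cost `x ↦ ‖A t x‖² / 2`. -/
def IsGradientFlow (A : ℝ → E →L[ℝ] F) (θ : ℝ → E) : Prop :=
  ∀ t ≥ 0, HasDerivAt θ (-((A t)†) (A t (θ t))) t

noncomputable def peContractionFactor (B T Cc : ℝ) : ℝ :=
  1 + Cc / (1 + B ^ 4 * T ^ 2)

namespace IsGradientFlow

variable {A : ℝ → E →L[ℝ] F} {θ : ℝ → E}

theorem continuousOn (hθ : IsGradientFlow A θ) : ContinuousOn θ (Ici 0) :=
  fun t ht => (hθ t ht).continuousAt.continuousWithinAt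

theorem continuousOn_norm_sq_apply (hθ : IsGradientFlow A θ) (hA : Continuous A) :
    ContinuousOn (fun s => ‖A s (θ s)‖ ^ 2) (Ici 0) :=
  (hA.continuousOn.clm_apply hθ.continuousOn).norm.pow 2

theorem hasDerivAt_norm_sq (hθ : IsGradientFlow A θ) {t : ℝ} (ht : 0 ≤ t) :
    HasDerivAt (‖θ ·‖ ^ 2) (-(2 * ‖A t (θ t)‖ ^ 2)) t := by
  convert (hθ t ht).norm_sq using 1
  rw [inner_neg_right, ContinuousLinearMap.adjoint_inner_right, real_inner_self_eq_norm_sq]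
  ring

theorem norm_sq_sub_norm_sq (hθ : IsGradientFlow A θ) (hA : Continuous A) {a b : ℝ}
    (ha : 0 ≤ a) (hab : a ≤ b) :
    ‖θ a‖ ^ 2 - ‖θ b‖ ^ 2 = 2 * ∫ s in a..b, ‖A s (θ s)‖ ^ 2 := by
  have hsub : uIcc a b ⊆ Ici 0 := by
    rw [uIcc_of_le hab]
    exact fun s hs => ha.trans hs.1
  have hFTC := integral_eq_sub_of_hasDerivAt (fun s hs => hθ.hasDerivAt_norm_sq (hsub hs))
    (((hθ.continuousOn_norm_sq_apply hA).mono hsub).intervalIntegrable.const_mul 2).neg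
  rw [integral_neg, integral_const_mul] at hFTC
  linarith

theorem antitoneOn_norm_sq (hθ : IsGradientFlow A θ) (hA : Continuous A) :
    AntitoneOn (‖θ ·‖ ^ 2) (Ici 0) := by
  intro a ha b _ hab
  have := hθ.norm_sq_sub_norm_sq hA ha hab
  have : 0 ≤ ∫ s in a..b, ‖A s (θ s)‖ ^ 2 := integral_nonneg hab fun _ _ => by positivity
  dsimp only
  linarith

theorem norm_sub_sq_le (hθ : IsGradientFlow A θ) (hA : Continuous A) {B t s : ℝ}
    (hAB : ∀ u ∈ Icc t s, ‖A u‖ ≤ B) (ht : 0 ≤ t) (hts : t ≤ s) :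
    ‖θ s - θ t‖ ^ 2 ≤ B ^ 2 * (s - t) * ∫ u in t..s, ‖A u (θ u)‖ ^ 2 := by
  have hsub : Icc t s ⊆ Ici 0 := fun u hu => ht.trans hu.1
  have hsub' : uIcc t s ⊆ Ici 0 := uIcc_of_le hts ▸ hsub
  have hderiv : ContinuousOn (fun u => -((A u)†) (A u (θ u))) (Icc t s) :=
    ((ContinuousLinearMap.adjoint.continuous.comp hA).continuousOn.clm_apply
      (hA.continuousOn.clm_apply (hθ.continuousOn.mono hsub))).neg
  have hincr : θ s - θ t = ∫ u in t..s, -((A u)†) (A u (θ u)) :=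
    (integral_eq_sub_of_hasDerivAt (fun u hu => hθ u (hsub' hu))
      (hderiv.mono (uIcc_of_le hts).le).intervalIntegrable).symm
  have hpt : ∀ u ∈ Icc t s, ‖-((A u)†) (A u (θ u))‖ ^ 2 ≤ B ^ 2 * ‖A u (θ u)‖ ^ 2 := by
    intro u hu
    rw [norm_neg, ← mul_pow]
    gcongr
    calc ‖((A u)†) (A u (θ u))‖ ≤ ‖(A u)†‖ * ‖A u (θ u)‖ := ((A u)†).le_opNorm _
      _ ≤ B * ‖A u (θ u)‖ := by
          gcongr
          rw [LinearIsometryEquiv.norm_map]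
          exact hAB u hu
  calc ‖θ s - θ t‖ ^ 2 ≤ (s - t) * ∫ u in t..s, ‖-((A u)†) (A u (θ u))‖ ^ 2 := by
        rw [hincr]
        exact norm_intervalIntegral_sq_le hts hderiv
    _ ≤ (s - t) * ∫ u in t..s, B ^ 2 * ‖A u (θ u)‖ ^ 2 := by
        gcongr
        refine integral_mono_on hts ?_ ?_ hpt
        · exact (hderiv.norm.pow 2).intervalIntegrable_of_Icc hts
        · exact (((hθ.continuousOn_norm_sq_apply hA).mono hsub).intervalIntegrable_of_Icc
            hts).const_mul _
    _ = B ^ 2 * (s - t) * ∫ u in t..s, ‖A u (θ u)‖ ^ 2 := by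
        rw [integral_const_mul]
        ring

theorem mul_norm_sq_le_integral (hθ : IsGradientFlow A θ) (hA : Continuous A) {B T Cc t : ℝ}
    (hAB : ∀ s ∈ Icc t (t + T), ‖A s‖ ≤ B) (hT : 0 ≤ T) (ht : 0 ≤ t)
    (hPE : ∀ x, Cc * ‖x‖ ^ 2 ≤ ∫ s in t..t + T, ‖A s x‖ ^ 2) :
    Cc * ‖θ t‖ ^ 2 ≤ 2 * (1 + B ^ 4 * T ^ 2) * ∫ s in t..t + T, ‖A s (θ s)‖ ^ 2 := by
  have htT : t ≤ t + T := le_add_of_nonneg_right hT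
  have hsub : Icc t (t + T) ⊆ Ici 0 := fun u hu => ht.trans hu.1
  have hg : ContinuousOn (fun s => ‖A s (θ s)‖ ^ 2) (Icc t (t + T)) :=
    (hθ.continuousOn_norm_sq_apply hA).mono hsub
  set G := ∫ s in t..t + T, ‖A s (θ s)‖ ^ 2
  have hdrift : ∀ s ∈ Icc t (t + T), ‖A s (θ s - θ t)‖ ^ 2 ≤ B ^ 4 * T * G := by
    intro s hs
    have hB : 0 ≤ B := (norm_nonneg _).trans (hAB s hs)
    have hGs : ∫ u in t..s, ‖A u (θ u)‖ ^ 2 ≤ G :=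
      integral_mono_interval le_rfl hs.1 hs.2 (.of_forall fun _ => by positivity)
        (hg.intervalIntegrable_of_Icc htT)
    calc ‖A s (θ s - θ t)‖ ^ 2 ≤ (B * ‖θ s - θ t‖) ^ 2 := by
          gcongr
          exact (A s).le_of_opNorm_le (hAB s hs) _
      _ ≤ B ^ 2 * (B ^ 2 * (s - t) * ∫ u in t..s, ‖A u (θ u)‖ ^ 2) := by
          rw [mul_pow]
          gcongr
          exact hθ.norm_sub_sq_le hA (fun u hu => hAB u ⟨hu.1, hu.2.trans hs.2⟩) ht hs.1
      _ ≤ B ^ 2 * (B ^ 2 * T * G) := by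
          gcongr
          · exact integral_nonneg hs.1 fun _ _ => by positivity
          · linarith [hs.2]
      _ = B ^ 4 * T * G := by ring
  have hsplit : ∀ s, ‖A s (θ t)‖ ^ 2 ≤ 2 * ‖A s (θ s)‖ ^ 2 + 2 * ‖A s (θ s - θ t)‖ ^ 2 := by
    intro s
    have h := norm_sub_le (A s (θ s)) (A s (θ s - θ t))
    rw [← map_sub, sub_sub_cancel] at h
    nlinarith [sq_nonneg (‖A s (θ s)‖ - ‖A s (θ s - θ t)‖), norm_nonneg (A s (θ t))]
  calc Cc * ‖θ t‖ ^ 2 ≤ ∫ s in t..t + T, ‖A s (θ t)‖ ^ 2 := hPE (θ t)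
    _ ≤ ∫ s in t..t + T, (2 * ‖A s (θ s)‖ ^ 2 + 2 * (B ^ 4 * T * G)) := by
        refine integral_mono_on htT ?_ ?_ fun s hs => ?_
        · exact ((hA.clm_apply continuous_const).norm.pow 2).intervalIntegrable _ _
        · exact ((hg.intervalIntegrable_of_Icc htT).const_mul 2).add intervalIntegrable_const
        · exact (hsplit s).trans (by gcongr; exact hdrift s hs)
    _ = 2 * (1 + B ^ 4 * T ^ 2) * G := by
        rw [integral_add ((hg.intervalIntegrable_of_Icc htT).const_mul 2)
          intervalIntegrable_const, integral_const_mul,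
          integral_const, smul_eq_mul]
        ring

theorem peContractionFactor_mul_norm_sq_le (hθ : IsGradientFlow A θ) (hA : Continuous A)
    {B T Cc t : ℝ} (hAB : ∀ t ≥ 0, ‖A t‖ ≤ B) (hT : 0 ≤ T) (hCc : 0 ≤ Cc)
    (hPE : IsPersistentlyExciting A T Cc) (ht : 0 ≤ t) :
    peContractionFactor B T Cc * ‖θ (t + T)‖ ^ 2 ≤ ‖θ t‖ ^ 2 := by
  have htT : t ≤ t + T := le_add_of_nonneg_right hT
  have henergy := hθ.norm_sq_sub_norm_sq hA ht htT
  have hkey := hθ.mul_norm_sq_le_integral hA (fun s hs => hAB s (ht.trans hs.1)) hT ht (hPE t ht)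
  have hmono : ‖θ (t + T)‖ ^ 2 ≤ ‖θ t‖ ^ 2 := hθ.antitoneOn_norm_sq hA ht (ht.trans htT) htT
  have hκ : Cc / (1 + B ^ 4 * T ^ 2) * ‖θ t‖ ^ 2 ≤ 2 * ∫ s in t..t + T, ‖A s (θ s)‖ ^ 2 := by
    rw [div_mul_eq_mul_div, div_le_iff₀ (by positivity)]
    linarith
  calc peContractionFactor B T Cc * ‖θ (t + T)‖ ^ 2
      = ‖θ (t + T)‖ ^ 2 + Cc / (1 + B ^ 4 * T ^ 2) * ‖θ (t + T)‖ ^ 2 := by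
        rw [peContractionFactor]; ring
    _ ≤ ‖θ (t + T)‖ ^ 2 + Cc / (1 + B ^ 4 * T ^ 2) * ‖θ t‖ ^ 2 := by gcongr
    _ ≤ ‖θ t‖ ^ 2 := by linarith

theorem norm_le_mul_exp (hθ : IsGradientFlow A θ) (hA : Continuous A) {B T Cc : ℝ}
    (hAB : ∀ t ≥ 0, ‖A t‖ ≤ B) (hT : 0 < T) (hCc : 0 ≤ Cc)
    (hPE : IsPersistentlyExciting A T Cc) {t : ℝ} (ht : 0 ≤ t) :
    ‖θ t‖ ≤ √(peContractionFactor B T Cc) *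
      exp (-(log (peContractionFactor B T Cc) / (2 * T) * t)) * ‖θ 0‖ := by
  set q := peContractionFactor B T Cc
  have hq : 1 ≤ q := le_add_of_nonneg_right (by positivity)
  have hsq := (hθ.antitoneOn_norm_sq hA).le_mul_exp_of_mul_le_shift (sq_nonneg _) hT hq
    (fun s hs => hθ.peContractionFactor_mul_norm_sq_le hA hAB hT.le hCc hPE hs) ht
  refine le_of_pow_le_pow_left₀ two_ne_zero (by positivity) (hsq.trans_eq ?_)
  rw [mul_pow, mul_pow, sq_sqrt (by positivity), ← exp_nat_mul]
  congr 3
  field_simp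
  ring

end IsGradientFlow

end GradientFlow

section Matrix

open WithLp

variable {m n : Type*} [Fintype m] [Fintype n]

theorem norm_toLp_eq_sqrt (v : n → ℝ) : ‖toLp 2 v‖ = √(∑ i, v i ^ 2) := by
  rw [EuclideanSpace.norm_eq]
  simp

theorem dotProduct_mulVec_entrywise_intervalIntegral {Q : ℝ → Matrix n n ℝ} {a b : ℝ}
    (hQ : ∀ i j, IntervalIntegrable (fun s => Q s i j) MeasureTheory.volume a b) (v : n → ℝ) :
    v ⬝ᵥ (Matrix.of fun i j => ∫ s in a..b, Q s i j) *ᵥ v = ∫ s in a..b, v ⬝ᵥ Q s *ᵥ v := by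
  have hint : ∀ i j,
      IntervalIntegrable (fun s => v i * (Q s i j * v j)) MeasureTheory.volume a b :=
    fun i j => ((hQ i j).mul_const _).const_mul _
  simp only [dotProduct, mulVec, of_apply, Finset.mul_sum]
  rw [integral_finsetSum (f := fun i s => ∑ j, v i * (Q s i j * v j)) fun i _ => by
    simpa only [Finset.sum_fn] using IntervalIntegrable.sum Finset.univ fun j _ => hint i j]
  refine Finset.sum_congr rfl fun i _ => ?_
  rw [integral_finsetSum fun j _ => hint i j]
  refine Finset.sum_congr rfl fun j _ => ?_
  rw [integral_const_mul, integral_mul_const]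

variable [DecidableEq n]

noncomputable def euclideanCLM :
    Matrix m n ℝ ≃ₗ[ℝ] (EuclideanSpace ℝ n →L[ℝ] EuclideanSpace ℝ m) :=
  toEuclideanLin.trans LinearMap.toContinuousLinearMap

@[simp]
theorem euclideanCLM_toLp (M : Matrix m n ℝ) (v : n → ℝ) :
    euclideanCLM M (toLp 2 v) = toLp 2 (M *ᵥ v) :=
  rfl

theorem adjoint_euclideanCLM [DecidableEq m] (M : Matrix m n ℝ) :
    (euclideanCLM M)† = euclideanCLM Mᵀ := by
  simp only [euclideanCLM, LinearEquiv.trans_apply]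
  rw [← conjTranspose_eq_transpose_of_trivial, toEuclideanLin_conjTranspose_eq_adjoint]
  exact (LinearMap.adjoint_toContinuousLinearMap _).symm

theorem continuous_euclideanCLM {M : ℝ → Matrix m n ℝ}
    (hM : ∀ i j, Continuous fun t => M t i j) :
    Continuous fun t => euclideanCLM (M t) :=
  (LinearMap.continuous_of_finiteDimensional
    (euclideanCLM (m := m) (n := n)).toLinearMap).comp (continuous_matrix hM)

theorem norm_euclideanCLM_toLp_sq (M : Matrix m n ℝ) (v : n → ℝ) :
    ‖euclideanCLM M (toLp 2 v)‖ ^ 2 = v ⬝ᵥ (Mᵀ * M) *ᵥ v := by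
  rw [euclideanCLM_toLp, EuclideanSpace.real_norm_sq_eq, ← mulVec_mulVec, dotProduct_mulVec,
    vecMul_transpose]
  simp [dotProduct, sq]

theorem isPersistentlyExciting_euclideanCLM {Ω : ℝ → Matrix m n ℝ}
    (hΩ : ∀ i j, Continuous fun t => Ω t i j) {T Cc : ℝ}
    (hPE : ∀ t ≥ (0 : ℝ), ((Matrix.of fun i j => ∫ s in t..(t + T), ((Ω s)ᵀ * Ω s) i j)
      - Cc • (1 : Matrix n n ℝ)).PosSemidef) :
    IsPersistentlyExciting (fun s => euclideanCLM (Ω s)) T Cc := by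
  intro t ht x
  have hQ : Continuous fun s => (Ω s)ᵀ * Ω s :=
    (continuous_matrix hΩ).matrix_transpose.matrix_mul (continuous_matrix hΩ)
  have hx := (hPE t ht).dotProduct_mulVec_nonneg (ofLp x)
  rw [sub_mulVec, dotProduct_sub, smul_mulVec, one_mulVec, dotProduct_smul, star_trivial,
    dotProduct_mulVec_entrywise_intervalIntegral
      fun i j => (hQ.matrix_elem i j).intervalIntegrable _ _] at hx
  rw [← toLp_ofLp 2 x]
  simp_rw [norm_euclideanCLM_toLp_sq, EuclideanSpace.real_norm_sq_eq]
  simp only [dotProduct, smul_eq_mul, sq] at hx ⊢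
  linarith

end Matrix

theorem norm_euclideanCLM_le_frobNorm {m n : ℕ} (M : Matrix (Fin m) (Fin n) ℝ) :
    ‖euclideanCLM M‖ ≤ frobNorm M := by
  refine ContinuousLinearMap.opNorm_le_bound _ (Real.sqrt_nonneg _) fun x => ?_
  rw [← WithLp.toLp_ofLp 2 x, euclideanCLM_toLp, norm_toLp_eq_sqrt, norm_toLp_eq_sqrt, frobNorm,
    ← Real.sqrt_mul (by positivity)]
  gcongr
  rw [Finset.sum_mul]
  refine Finset.sum_le_sum fun i _ => ?_
  simpa [mulVec, dotProduct] using
    Finset.sum_mul_sq_le_sq_mul_sq Finset.univ (M i) (WithLp.ofLp x)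

theorem pe_gradient_estimator_exponential_convergence_general
    (m n : ℕ)
    (B T Cc : ℝ) (hT : 0 < T) (hCc : 0 < Cc) :
    ∃ c > (0 : ℝ), ∃ γ > (0 : ℝ),
      ∀ (Ω : ℝ → Matrix (Fin m) (Fin n) ℝ),
        (∀ i j, Continuous fun t => Ω t i j) →
        (∀ t ≥ (0 : ℝ), frobNorm (Ω t) ≤ B) →
        (∀ t ≥ (0 : ℝ),
          ((Matrix.of fun i j => ∫ s in t..(t + T), ((Ω s)ᵀ * Ω s) i j)
            - Cc • (1 : Matrix (Fin n) (Fin n) ℝ)).PosSemidef) →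
        ∀ (θ : ℝ → Fin n → ℝ),
          (∀ t ≥ (0 : ℝ), HasDerivAt θ (-(((Ω t)ᵀ * Ω t).mulVec (θ t))) t) →
          ∀ t ≥ (0 : ℝ), enorm' (θ t) ≤ c * Real.exp (-(γ * t)) * enorm' (θ 0) := by
  have hq : 1 < peContractionFactor B T Cc := lt_add_of_pos_right _ (by positivity)
  refine ⟨√(peContractionFactor B T Cc), sqrt_pos.2 (one_pos.trans hq),
    log (peContractionFactor B T Cc) / (2 * T), div_pos (log_pos hq) (by positivity),
    fun Ω hΩ hΩB hPE θ hθ t ht => ?_⟩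
  have hflow : IsGradientFlow (fun s => euclideanCLM (Ω s)) (fun s => WithLp.toLp 2 (θ s)) := by
    intro s hs
    refine ((EuclideanSpace.equiv (Fin n) ℝ).symm.hasFDerivAt.comp_hasDerivAt s
      (hθ s hs)).congr_deriv ?_
    simp only [adjoint_euclideanCLM, euclideanCLM_toLp, mulVec_mulVec]
    rfl
  simpa only [enorm', ← norm_toLp_eq_sqrt] using
    hflow.norm_le_mul_exp (continuous_euclideanCLM hΩ)
      (fun s hs => (norm_euclideanCLM_le_frobNorm _).trans (hΩB s hs)) hT hCc.le
      (isPersistentlyExciting_euclideanCLM hΩ hPE) ht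

/-- if the bounded continuous regressor `Ω` is persistently exciting,
then the gradient-estimator error dynamics `θ̃' = -ΩᵀΩ·θ̃` is globally exponentially
stable, with constants depending only on the bound `B`, the window `T` and the
excitation level `C_c`. -/
theorem pe_gradient_estimator_exponential_convergence
    (m n : ℕ) (hm : 1 ≤ m) (hn : 1 ≤ n)
    (B T Cc : ℝ) (hB : 0 < B) (hT : 0 < T) (hCc : 0 < Cc) :
    ∃ c > (0 : ℝ), ∃ γ > (0 : ℝ),
      ∀ (Ω : ℝ → Matrix (Fin m) (Fin n) ℝ),
        (∀ i j, Continuous fun t => Ω t i j) →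
        (∀ t ≥ (0 : ℝ), frobNorm (Ω t) ≤ B) →
        (∀ t ≥ (0 : ℝ),
          ((Matrix.of fun i j => ∫ s in t..(t + T), ((Ω s)ᵀ * Ω s) i j)
            - Cc • (1 : Matrix (Fin n) (Fin n) ℝ)).PosSemidef) →
        ∀ (θ : ℝ → Fin n → ℝ),
          (∀ t ≥ (0 : ℝ), HasDerivAt θ (-(((Ω t)ᵀ * Ω t).mulVec (θ t))) t) →
          ∀ t ≥ (0 : ℝ), enorm' (θ t) ≤ c * Real.exp (-(γ * t)) * enorm' (θ 0) :=
  pe_gradient_estimator_exponential_convergence_general m n B T Cc hT hCc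
end
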